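/- arXiv:1607.01848 — 11 statements merged into one kernel-verified Lean document; each statement's English description precedes it below -/
import Mathlib

section
/- Let A ∈ ℝ^{n×n}, B ∈ ℝ^{n×m}, let R₁, R₂ ∈ ℝ^{m×m} be symmetric positive definite, Q₁ ∈ ℝ^{n×n} symmetric positive semidefinite, and K ∈ ℝ^{N×N} symmetric positive semidefinite. Suppose P₁ ∈ ℝ^{n×n} is symmetric positive definite and satisfies the local Riccati equation P₁A + AᵀP₁ − P₁BR₁BᵀP₁ + Q₁ = 0. Set Q₂ = P₁BR₂BᵀP₁, Q̃ = I_N⊗Q₁ + K⊗Q₂, and S = I_N⊗R₁ + K⊗R₂. Then P̃ = I_N⊗P₁ is symmetric positive definite and satisfies the global Riccati equation P̃(I_N⊗A) + (I_N⊗A)ᵀP̃ + Q̃ − P̃(I_N⊗B)S(I_N⊗B)ᵀP̃ = 0, and the feedback gain F = S(I_N⊗B)ᵀP̃ satisfies F = I_N⊗(R₁BᵀP₁) + K⊗(R₂BᵀP₁). -/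
open Matrix
open scoped Kronecker

namespace Matrix

theorem kronecker_sub {R l m n p : Type*} [NonUnitalNonAssocRing R] (X : Matrix l m R)
    (Y₁ Y₂ : Matrix n p R) : X ⊗ₖ (Y₁ - Y₂) = X ⊗ₖ Y₁ - X ⊗ₖ Y₂ := by
  ext
  simp only [kroneckerMap_apply, sub_apply, mul_sub]

variable {R : Type*} [CommRing R] {ι κ μ : Type*} [DecidableEq ι]

theorem transpose_one_kronecker (X : Matrix κ μ R) :
    ((1 : Matrix ι ι R) ⊗ₖ X)ᵀ = (1 : Matrix ι ι R) ⊗ₖ Xᵀ := by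
  rw [← kroneckerMap_transpose, transpose_one]

variable [Fintype ι] [Fintype κ] [Fintype μ]

theorem kronecker_add_mul_one_kronecker_transpose_mul (B : Matrix κ μ R) (R₁ R₂ : Matrix μ μ R)
    (P : Matrix κ κ R) (K : Matrix ι ι R) :
    ((1 : Matrix ι ι R) ⊗ₖ R₁ + K ⊗ₖ R₂) * ((1 : Matrix ι ι R) ⊗ₖ B)ᵀ * ((1 : Matrix ι ι R) ⊗ₖ P)
      = (1 : Matrix ι ι R) ⊗ₖ (R₁ * Bᵀ * P) + K ⊗ₖ (R₂ * Bᵀ * P) := by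
  rw [transpose_one_kronecker, Matrix.add_mul, Matrix.add_mul]
  simp only [← mul_kronecker_mul, mul_one]

/-- The coupling terms `K ⊗ P B R₂ Bᵀ P` of the state weight and of the feedback term cancel. -/
theorem one_kronecker_riccati (A : Matrix κ κ R) (B : Matrix κ μ R) (R₁ R₂ : Matrix μ μ R)
    (Q₁ P : Matrix κ κ R) (K : Matrix ι ι R) :
    ((1 : Matrix ι ι R) ⊗ₖ P) * ((1 : Matrix ι ι R) ⊗ₖ A)
        + ((1 : Matrix ι ι R) ⊗ₖ A)ᵀ * ((1 : Matrix ι ι R) ⊗ₖ P)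
        + ((1 : Matrix ι ι R) ⊗ₖ Q₁ + K ⊗ₖ (P * B * R₂ * Bᵀ * P))
        - ((1 : Matrix ι ι R) ⊗ₖ P) * ((1 : Matrix ι ι R) ⊗ₖ B)
          * ((1 : Matrix ι ι R) ⊗ₖ R₁ + K ⊗ₖ R₂) * ((1 : Matrix ι ι R) ⊗ₖ B)ᵀ
          * ((1 : Matrix ι ι R) ⊗ₖ P)
      = (1 : Matrix ι ι R) ⊗ₖ (P * A + Aᵀ * P - P * B * R₁ * Bᵀ * P + Q₁) := by
  have hfeedback : ((1 : Matrix ι ι R) ⊗ₖ P) * ((1 : Matrix ι ι R) ⊗ₖ B)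
        * ((1 : Matrix ι ι R) ⊗ₖ R₁ + K ⊗ₖ R₂) * ((1 : Matrix ι ι R) ⊗ₖ B)ᵀ
        * ((1 : Matrix ι ι R) ⊗ₖ P)
      = (1 : Matrix ι ι R) ⊗ₖ (P * B * R₁ * Bᵀ * P) + K ⊗ₖ (P * B * R₂ * Bᵀ * P) := by
    simp only [Matrix.mul_assoc]
    rw [← Matrix.mul_assoc (_ + _), kronecker_add_mul_one_kronecker_transpose_mul]
    simp only [Matrix.mul_add, ← mul_kronecker_mul, one_mul, Matrix.mul_assoc]
  rw [hfeedback, transpose_one_kronecker, ← mul_kronecker_mul, ← mul_kronecker_mul, one_mul]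
  simp only [kronecker_add, kronecker_sub]
  abel

end Matrix

theorem stmt_0_general {n m N : ℕ}
    (A : Matrix (Fin n) (Fin n) ℝ) (B : Matrix (Fin n) (Fin m) ℝ)
    (R₁ R₂ : Matrix (Fin m) (Fin m) ℝ) (Q₁ : Matrix (Fin n) (Fin n) ℝ)
    (K : Matrix (Fin N) (Fin N) ℝ) (P₁ : Matrix (Fin n) (Fin n) ℝ)
    (hP₁ : P₁.PosDef)
    (hRic : P₁ * A + Aᵀ * P₁ - P₁ * B * R₁ * Bᵀ * P₁ + Q₁ = 0)
    (Q₂ : Matrix (Fin n) (Fin n) ℝ) (hQ₂ : Q₂ = P₁ * B * R₂ * Bᵀ * P₁)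
    (Qt : Matrix (Fin N × Fin n) (Fin N × Fin n) ℝ)
    (hQt : Qt = (1 : Matrix (Fin N) (Fin N) ℝ) ⊗ₖ Q₁ + K ⊗ₖ Q₂)
    (S : Matrix (Fin N × Fin m) (Fin N × Fin m) ℝ)
    (hS : S = (1 : Matrix (Fin N) (Fin N) ℝ) ⊗ₖ R₁ + K ⊗ₖ R₂)
    (Pt : Matrix (Fin N × Fin n) (Fin N × Fin n) ℝ)
    (hPt : Pt = (1 : Matrix (Fin N) (Fin N) ℝ) ⊗ₖ P₁) :
    Pt.PosDef ∧
    Pt * ((1 : Matrix (Fin N) (Fin N) ℝ) ⊗ₖ A)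
      + ((1 : Matrix (Fin N) (Fin N) ℝ) ⊗ₖ A)ᵀ * Pt + Qt
      - Pt * ((1 : Matrix (Fin N) (Fin N) ℝ) ⊗ₖ B) * S
        * ((1 : Matrix (Fin N) (Fin N) ℝ) ⊗ₖ B)ᵀ * Pt = 0 ∧
    S * ((1 : Matrix (Fin N) (Fin N) ℝ) ⊗ₖ B)ᵀ * Pt
      = (1 : Matrix (Fin N) (Fin N) ℝ) ⊗ₖ (R₁ * Bᵀ * P₁) + K ⊗ₖ (R₂ * Bᵀ * P₁) := by
  subst hQ₂ hQt hS hPt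
  refine ⟨PosDef.one.kronecker hP₁, ?_, kronecker_add_mul_one_kronecker_transpose_mul B R₁ R₂ P₁ K⟩
  rw [one_kronecker_riccati, hRic, kronecker_zero]

/-- Hierarchical decentralized LQR design: if `P₁ ≻ 0` solves the local Riccati equation
`P₁A + AᵀP₁ − P₁BR₁BᵀP₁ + Q₁ = 0` and `Q₂ = P₁BR₂BᵀP₁`, then `P̃ = I_N ⊗ P₁` is symmetric
positive definite and solves the global Riccati equation with weights
`Q̃ = I_N ⊗ Q₁ + K ⊗ Q₂`, `S = I_N ⊗ R₁ + K ⊗ R₂`, and the feedback gain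
`F = S (I_N ⊗ B)ᵀ P̃` is `I_N ⊗ (R₁BᵀP₁) + K ⊗ (R₂BᵀP₁)`. -/
theorem stmt_0 {n m N : ℕ}
    (A : Matrix (Fin n) (Fin n) ℝ) (B : Matrix (Fin n) (Fin m) ℝ)
    (R₁ R₂ : Matrix (Fin m) (Fin m) ℝ) (Q₁ : Matrix (Fin n) (Fin n) ℝ)
    (K : Matrix (Fin N) (Fin N) ℝ) (P₁ : Matrix (Fin n) (Fin n) ℝ)
    (hR₁ : R₁.PosDef) (hR₂ : R₂.PosDef) (hQ₁ : Q₁.PosSemidef) (hK : K.PosSemidef)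
    (hP₁ : P₁.PosDef)
    (hRic : P₁ * A + Aᵀ * P₁ - P₁ * B * R₁ * Bᵀ * P₁ + Q₁ = 0)
    (Q₂ : Matrix (Fin n) (Fin n) ℝ) (hQ₂ : Q₂ = P₁ * B * R₂ * Bᵀ * P₁)
    (Qt : Matrix (Fin N × Fin n) (Fin N × Fin n) ℝ)
    (hQt : Qt = (1 : Matrix (Fin N) (Fin N) ℝ) ⊗ₖ Q₁ + K ⊗ₖ Q₂)
    (S : Matrix (Fin N × Fin m) (Fin N × Fin m) ℝ)
    (hS : S = (1 : Matrix (Fin N) (Fin N) ℝ) ⊗ₖ R₁ + K ⊗ₖ R₂)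
    (Pt : Matrix (Fin N × Fin n) (Fin N × Fin n) ℝ)
    (hPt : Pt = (1 : Matrix (Fin N) (Fin N) ℝ) ⊗ₖ P₁) :
    Pt.PosDef ∧
    Pt * ((1 : Matrix (Fin N) (Fin N) ℝ) ⊗ₖ A)
      + ((1 : Matrix (Fin N) (Fin N) ℝ) ⊗ₖ A)ᵀ * Pt + Qt
      - Pt * ((1 : Matrix (Fin N) (Fin N) ℝ) ⊗ₖ B) * S
        * ((1 : Matrix (Fin N) (Fin N) ℝ) ⊗ₖ B)ᵀ * Pt = 0 ∧
    S * ((1 : Matrix (Fin N) (Fin N) ℝ) ⊗ₖ B)ᵀ * Pt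
      = (1 : Matrix (Fin N) (Fin N) ℝ) ⊗ₖ (R₁ * Bᵀ * P₁) + K ⊗ₖ (R₂ * Bᵀ * P₁) :=
  stmt_0_general A B R₁ R₂ Q₁ K P₁ hP₁ hRic Q₂ hQ₂ Qt hQt S hS Pt hPt
end

section
/- Let A ∈ ℝ^{n×n}, B ∈ ℝ^{n×m}, R₁ ∈ ℝ^{m×m}. Let λ₁,…,λ_q ∈ ℝ, Λ = diag(λ₁,…,λ_q), and let V ∈ ℝ^{n×q} satisfy AᵀV = VΛ. Let Q̃₁ ∈ ℝ^{q×q} be symmetric, and set Q₁ = VQ̃₁Vᵀ and R̃₁ = VᵀBR₁BᵀV. If P̃₁ ∈ ℝ^{q×q} satisfies the reduced q-dimensional Riccati equation P̃₁Λ + ΛP̃₁ − P̃₁R̃₁P̃₁ + Q̃₁ = 0, then P₁ = VP̃₁Vᵀ satisfies the full n-dimensional Riccati equation P₁A + AᵀP₁ − P₁BR₁BᵀP₁ + Q₁ = 0. -/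
open Matrix

/-- Reduced-order Riccati equation: if `AᵀV = VΛ` with `Λ = diag(λ₁,…,λ_q)`,
`Q₁ = V Q̃₁ Vᵀ`, `R̃₁ = Vᵀ B R₁ Bᵀ V`, and `P̃₁` solves the reduced `q`-dimensional Riccati
equation `P̃₁Λ + ΛP̃₁ − P̃₁R̃₁P̃₁ + Q̃₁ = 0`, then `P₁ = V P̃₁ Vᵀ` solves the full
`n`-dimensional Riccati equation `P₁A + AᵀP₁ − P₁BR₁BᵀP₁ + Q₁ = 0`. -/
theorem stmt_2 {n m q : ℕ}
    (A : Matrix (Fin n) (Fin n) ℝ) (B : Matrix (Fin n) (Fin m) ℝ)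
    (R₁ : Matrix (Fin m) (Fin m) ℝ)
    (l : Fin q → ℝ) (V : Matrix (Fin n) (Fin q) ℝ)
    (hV : Aᵀ * V = V * Matrix.diagonal l)
    (Qt₁ : Matrix (Fin q) (Fin q) ℝ) (hQt₁ : Qt₁.IsSymm)
    (Q₁ : Matrix (Fin n) (Fin n) ℝ) (hQ₁ : Q₁ = V * Qt₁ * Vᵀ)
    (Rt₁ : Matrix (Fin q) (Fin q) ℝ) (hRt₁ : Rt₁ = Vᵀ * B * R₁ * Bᵀ * V)
    (Pt₁ : Matrix (Fin q) (Fin q) ℝ)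
    (hRic : Pt₁ * Matrix.diagonal l + Matrix.diagonal l * Pt₁ - Pt₁ * Rt₁ * Pt₁ + Qt₁ = 0) :
    (V * Pt₁ * Vᵀ) * A + Aᵀ * (V * Pt₁ * Vᵀ)
      - (V * Pt₁ * Vᵀ) * B * R₁ * Bᵀ * (V * Pt₁ * Vᵀ) + Q₁ = 0 := by
  have hVA : Vᵀ * A = Matrix.diagonal l * Vᵀ := by
    have := congrArg Matrix.transpose hV
    simpa [Matrix.transpose_mul, Matrix.diagonal_transpose] using this
  have key : (V * Pt₁ * Vᵀ) * A + Aᵀ * (V * Pt₁ * Vᵀ)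
      - (V * Pt₁ * Vᵀ) * B * R₁ * Bᵀ * (V * Pt₁ * Vᵀ) + Q₁
      = V * (Pt₁ * Matrix.diagonal l + Matrix.diagonal l * Pt₁
          - Pt₁ * Rt₁ * Pt₁ + Qt₁) * Vᵀ := by
    subst hQ₁ hRt₁
    have h1 : (V * Pt₁ * Vᵀ) * A = V * (Pt₁ * Matrix.diagonal l) * Vᵀ := by
      rw [Matrix.mul_assoc (V * Pt₁) Vᵀ A, hVA, ← Matrix.mul_assoc, Matrix.mul_assoc V Pt₁]
    have h2 : Aᵀ * (V * Pt₁ * Vᵀ) = V * (Matrix.diagonal l * Pt₁) * Vᵀ := by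
      rw [← Matrix.mul_assoc, ← Matrix.mul_assoc, hV, Matrix.mul_assoc V]
    rw [h1, h2]
    simp only [Matrix.mul_add, Matrix.add_mul, Matrix.mul_sub, Matrix.sub_mul,
      Matrix.mul_assoc]
  rw [key, hRic]
  simp
end

section
/- Let A ∈ ℝ^{n×n}, B ∈ ℝ^{n×m}, R₁, R₂ ∈ ℝ^{m×m}, K ∈ ℝ^{N×N}, V ∈ ℝ^{n×q}, P̃₁ ∈ ℝ^{q×q}. Set P₁ = VP̃₁Vᵀ and 𝔸 = I_N⊗(A − BR₁BᵀP₁) − K⊗(BR₂BᵀP₁). If λ ∈ ℂ and η ∈ ℂⁿ is a nonzero vector with Aη = λη and Vᵀη = 0, then for every standard basis vector e_i of ℝᴺ (i = 1,…,N) one has 𝔸(e_i⊗η) = λ(e_i⊗η); in particular λ is an eigenvalue of 𝔸. -/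
open Matrix
open scoped Kronecker

/-- If `Aη = λη` and `Vᵀη = 0` for a nonzero complex vector `η`, then for every standard
basis vector `e_i` of `ℝᴺ`, the vector `e_i ⊗ η` is an eigenvector of the closed-loop matrix
`𝔸 = I_N ⊗ (A − BR₁BᵀP₁) − K ⊗ (BR₂BᵀP₁)` (with `P₁ = V P̃₁ Vᵀ`) for the eigenvalue `λ`;
in particular `λ` is an eigenvalue of `𝔸`. -/
theorem stmt_3 {n m q N : ℕ} (hN : 0 < N)
    (A : Matrix (Fin n) (Fin n) ℝ) (B : Matrix (Fin n) (Fin m) ℝ)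
    (R₁ R₂ : Matrix (Fin m) (Fin m) ℝ) (K : Matrix (Fin N) (Fin N) ℝ)
    (V : Matrix (Fin n) (Fin q) ℝ) (Pt₁ : Matrix (Fin q) (Fin q) ℝ)
    (P₁ : Matrix (Fin n) (Fin n) ℝ) (hP₁ : P₁ = V * Pt₁ * Vᵀ)
    (𝔸 : Matrix (Fin N × Fin n) (Fin N × Fin n) ℝ)
    (h𝔸 : 𝔸 = (1 : Matrix (Fin N) (Fin N) ℝ) ⊗ₖ (A - B * R₁ * Bᵀ * P₁)
              - K ⊗ₖ (B * R₂ * Bᵀ * P₁))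
    (lam : ℂ) (η : Fin n → ℂ) (hη : η ≠ 0)
    (hAη : (A.map Complex.ofReal).mulVec η = lam • η)
    (hVη : (Vᵀ.map Complex.ofReal).mulVec η = 0) :
    (∀ i : Fin N,
      (𝔸.map Complex.ofReal).mulVec (fun p => (Pi.single i 1 : Fin N → ℂ) p.1 * η p.2)
        = lam • (fun p => (Pi.single i 1 : Fin N → ℂ) p.1 * η p.2)) ∧
    Module.End.HasEigenvalue (Matrix.mulVecLin (𝔸.map Complex.ofReal)) lam := by
  have f := Complex.ofRealHom
  -- map commutes with multiplication
  have hmap : ∀ (X : Matrix (Fin n) (Fin n) ℝ),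
      ((X * P₁).map Complex.ofReal).mulVec η = 0 := by
    intro X
    have : (X * P₁).map Complex.ofReal
        = ((X * (V * Pt₁)).map Complex.ofReal) * (Vᵀ.map Complex.ofReal) := by
      rw [hP₁, ← Matrix.mul_assoc]
      ext a b
      simp [Matrix.mul_apply, Matrix.map_apply]
    rw [this, ← Matrix.mulVec_mulVec, hVη, Matrix.mulVec_zero]
  -- action of the two blocks on η
  have hM : ∀ a : Fin n,
      (∑ b, ((A - B * R₁ * Bᵀ * P₁) a b : ℂ) * η b) = lam * η a := by
    intro a
    have h1 : (A - B * R₁ * Bᵀ * P₁).map Complex.ofReal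
        = A.map Complex.ofReal - (B * R₁ * Bᵀ * P₁).map Complex.ofReal := by
      ext a b
      simp [Matrix.map_apply]
    have h2 : Matrix.mulVec (((B * R₁ * Bᵀ) * P₁).map Complex.ofReal) η = 0 := hmap _
    have h3 : ((A - B * R₁ * Bᵀ * P₁).map Complex.ofReal).mulVec η = lam • η := by
      rw [h1, Matrix.sub_mulVec, hAη, h2, sub_zero]
    have := congrFun h3 a
    simpa [Matrix.mulVec, dotProduct, Matrix.map_apply] using this
  have hM' : ∀ a : Fin n,
      (∑ b, ((B * R₂ * Bᵀ * P₁) a b : ℂ) * η b) = 0 := by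
    intro a
    have h2 : Matrix.mulVec (((B * R₂ * Bᵀ) * P₁).map Complex.ofReal) η = 0 := hmap _
    have := congrFun h2 a
    simpa [Matrix.mulVec, dotProduct, Matrix.map_apply, Matrix.mul_assoc] using this
  have key : ∀ i : Fin N,
      (𝔸.map Complex.ofReal).mulVec (fun p => (Pi.single i 1 : Fin N → ℂ) p.1 * η p.2)
        = lam • (fun p => (Pi.single i 1 : Fin N → ℂ) p.1 * η p.2) := by
    intro i
    funext p
    obtain ⟨k, a⟩ := p
    have : (𝔸.map Complex.ofReal).mulVec (fun p => (Pi.single i 1 : Fin N → ℂ) p.1 * η p.2) (k, a)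
        = ∑ l : Fin N, ∑ b : Fin n,
            (𝔸 (k, a) (l, b) : ℂ) * ((Pi.single i 1 : Fin N → ℂ) l * η b) := by
      simp [Matrix.mulVec, dotProduct, Matrix.map_apply, Fintype.sum_prod_type]
    rw [this]
    have hstep : ∀ l : Fin N, ∑ b : Fin n,
        (𝔸 (k, a) (l, b) : ℂ) * ((Pi.single i 1 : Fin N → ℂ) l * η b)
        = (Pi.single i 1 : Fin N → ℂ) l *
            ((((1 : Matrix (Fin N) (Fin N) ℝ) k l : ℂ)) * (lam * η a)) := by
      intro l
      have : ∀ b, (𝔸 (k, a) (l, b) : ℂ) * ((Pi.single i 1 : Fin N → ℂ) l * η b)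
          = (Pi.single i 1 : Fin N → ℂ) l *
            ((((1 : Matrix (Fin N) (Fin N) ℝ) k l : ℂ)) *
              (((A - B * R₁ * Bᵀ * P₁) a b : ℂ) * η b)
            - ((K k l : ℂ)) * (((B * R₂ * Bᵀ * P₁) a b : ℂ) * η b)) := by
        intro b
        simp [h𝔸, Matrix.kroneckerMap_apply, Matrix.sub_apply]
        ring
      rw [Finset.sum_congr rfl fun b _ => this b, ← Finset.mul_sum, Finset.sum_sub_distrib,
        ← Finset.mul_sum, ← Finset.mul_sum, hM a, hM' a, mul_zero, sub_zero]
    rw [Finset.sum_congr rfl fun l _ => hstep l]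
    by_cases hk : k = i
    · subst hk
      rw [Finset.sum_eq_single k]
      · simp [Matrix.one_apply]
      · intro l _ hl
        simp [Matrix.one_apply, Ne.symm hl]
      · simp
    · rw [Finset.sum_eq_single i]
      · simp [Matrix.one_apply, hk]
      · intro l _ hl
        simp [Pi.single_apply, hl]
      · simp
  refine ⟨key, ?_⟩
  obtain ⟨b, hb⟩ : ∃ b, η b ≠ 0 := by
    by_contra h
    push_neg at h
    exact hη (funext h)
  set i : Fin N := ⟨0, hN⟩
  refine Module.End.hasEigenvalue_of_hasEigenvector
    (x := fun p => (Pi.single i 1 : Fin N → ℂ) p.1 * η p.2) ⟨?_, ?_⟩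
  · rw [Module.End.mem_eigenspace_iff]
    simpa [Matrix.mulVecLin_apply] using key i
  · intro h
    have := congrFun h (i, b)
    simp at this
    exact hb this
end

section
/- Let A ∈ ℝ^{n×n}, B ∈ ℝ^{n×m}, R₁, R₂ ∈ ℝ^{m×m}, and let K ∈ ℝ^{N×N} be symmetric. Let Λ = diag(λ₁,…,λ_q) with λ₁,…,λ_q ∈ ℝ and let V ∈ ℝ^{n×q} satisfy AᵀV = VΛ. Let P̃₁ ∈ ℝ^{q×q}, set P₁ = VP̃₁Vᵀ and 𝔸 = I_N⊗(A − BR₁BᵀP₁) − K⊗(BR₂BᵀP₁). Suppose ρ ∈ ℝᴺ is nonzero with Kρ = γρ, and ξ ∈ ℂ^q satisfies ξᵀΞ_γ = αξᵀ where Ξ_γ = Λ − VᵀB(R₁+γR₂)BᵀVP̃₁, with Vξ ≠ 0. Then (ρ⊗(Vξ))ᵀ𝔸 = α(ρ⊗(Vξ))ᵀ; in particular α is an eigenvalue of 𝔸. -/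
open Matrix
open scoped Kronecker

set_option maxHeartbeats 1000000


lemma vecMul_kron {R : Type*} [CommRing R] {N n N' n' : ℕ}
    (u : Fin N → R) (v : Fin n → R)
    (X : Matrix (Fin N) (Fin N') R) (Y : Matrix (Fin n) (Fin n') R) :
    Matrix.vecMul (fun p : Fin N × Fin n => u p.1 * v p.2) (X ⊗ₖ Y)
      = fun p : Fin N' × Fin n' => Matrix.vecMul u X p.1 * Matrix.vecMul v Y p.2 := by
  funext p
  simp only [Matrix.vecMul, dotProduct, Matrix.kroneckerMap_apply]
  rw [Fintype.sum_prod_type]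
  simp only [Finset.sum_mul, Finset.mul_sum]
  rw [Finset.sum_comm]
  apply Finset.sum_congr rfl
  intro i _
  apply Finset.sum_congr rfl
  intro j _
  ring

lemma vecMul_smulM {k r : Type*} [Fintype k] (a : ℂ) (v : k → ℂ) (M : Matrix k r ℂ) :
    Matrix.vecMul v (a • M) = a • Matrix.vecMul v M := by
  ext i
  simp only [Matrix.vecMul, dotProduct, Matrix.smul_apply, Pi.smul_apply, smul_eq_mul,
    Finset.mul_sum]
  apply Finset.sum_congr rfl
  intro j _
  ring

lemma map_kron {a b c d : ℕ} (X : Matrix (Fin a) (Fin b) ℝ) (Y : Matrix (Fin c) (Fin d) ℝ) :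
    (X ⊗ₖ Y).map Complex.ofReal = (X.map Complex.ofReal) ⊗ₖ (Y.map Complex.ofReal) := by
  ext p r
  simp [Matrix.kroneckerMap_apply, Matrix.map_apply]

/-- Left-eigenvector lemma: if `Kρ = γρ` with `ρ ≠ 0` and `ξᵀ Ξ_γ = α ξᵀ` where
`Ξ_γ = Λ − VᵀB(R₁+γR₂)BᵀV P̃₁` and `Vξ ≠ 0`, then `(ρ ⊗ (Vξ))ᵀ 𝔸 = α (ρ ⊗ (Vξ))ᵀ` for the
closed-loop matrix `𝔸 = I_N ⊗ (A − BR₁BᵀP₁) − K ⊗ (BR₂BᵀP₁)` with `P₁ = V P̃₁ Vᵀ`;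
in particular `α` is an eigenvalue of `𝔸`. -/
theorem stmt_4 {n m q N : ℕ}
    (A : Matrix (Fin n) (Fin n) ℝ) (B : Matrix (Fin n) (Fin m) ℝ)
    (R₁ R₂ : Matrix (Fin m) (Fin m) ℝ)
    (K : Matrix (Fin N) (Fin N) ℝ) (hK : K.IsSymm)
    (l : Fin q → ℝ) (V : Matrix (Fin n) (Fin q) ℝ)
    (hV : Aᵀ * V = V * Matrix.diagonal l)
    (Pt₁ : Matrix (Fin q) (Fin q) ℝ)
    (P₁ : Matrix (Fin n) (Fin n) ℝ) (hP₁ : P₁ = V * Pt₁ * Vᵀ)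
    (𝔸 : Matrix (Fin N × Fin n) (Fin N × Fin n) ℝ)
    (h𝔸 : 𝔸 = (1 : Matrix (Fin N) (Fin N) ℝ) ⊗ₖ (A - B * R₁ * Bᵀ * P₁)
              - K ⊗ₖ (B * R₂ * Bᵀ * P₁))
    (ρ : Fin N → ℝ) (hρ : ρ ≠ 0) (γ : ℝ) (hKρ : K.mulVec ρ = γ • ρ)
    (Ξ : Matrix (Fin q) (Fin q) ℝ)
    (hΞ : Ξ = Matrix.diagonal l - Vᵀ * B * (R₁ + γ • R₂) * Bᵀ * V * Pt₁)
    (ξ : Fin q → ℂ) (α : ℂ)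
    (hξ : Matrix.vecMul ξ (Ξ.map Complex.ofReal) = α • ξ)
    (hVξ : (V.map Complex.ofReal).mulVec ξ ≠ 0) :
    Matrix.vecMul (fun p : Fin N × Fin n => (ρ p.1 : ℂ) * (V.map Complex.ofReal).mulVec ξ p.2)
        (𝔸.map Complex.ofReal)
      = α • (fun p : Fin N × Fin n => (ρ p.1 : ℂ) * (V.map Complex.ofReal).mulVec ξ p.2) ∧
    Module.End.HasEigenvalue (Matrix.mulVecLin (𝔸.map Complex.ofReal)) α := by
  classical
  set C : ℝ →+* ℂ := Complex.ofRealHom with hCdef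
  have hCcoe : ⇑C = Complex.ofReal := rfl
  set w : Fin n → ℂ := (V.map Complex.ofReal).mulVec ξ with hwdef
  -- w as a vecMul
  have hw : w = Matrix.vecMul ξ ((Vᵀ).map Complex.ofReal) := by
    rw [hwdef, Matrix.transpose_map, ← Matrix.mulVec_transpose, Matrix.transpose_transpose]
  -- real matrix identity
  have h1 : Vᵀ * A = Matrix.diagonal l * Vᵀ := by
    have h := congrArg Matrix.transpose hV
    simpa [Matrix.transpose_mul, Matrix.diagonal_transpose] using h
  have hreal : Vᵀ * (A - B * R₁ * Bᵀ * P₁) - γ • (Vᵀ * (B * R₂ * Bᵀ * P₁)) = Ξ * Vᵀ := by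
    subst hP₁ hΞ
    simp only [Matrix.mul_sub, Matrix.sub_mul, Matrix.add_mul, Matrix.mul_add,
      Matrix.smul_mul, Matrix.mul_smul, Matrix.mul_assoc]
    rw [h1]
    abel
  -- complexify: map commutes with scalar combo
  have hmap : (Vᵀ * (A - B * R₁ * Bᵀ * P₁)).map Complex.ofReal
        - (γ : ℂ) • ((Vᵀ * (B * R₂ * Bᵀ * P₁)).map Complex.ofReal)
      = (Ξ * Vᵀ).map Complex.ofReal := by
    rw [← hreal]
    ext i j
    simp [Matrix.map_apply, Matrix.sub_apply, Matrix.smul_apply]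
  have hsplit : ∀ (M : Matrix (Fin n) (Fin n) ℝ),
      Matrix.vecMul w (M.map Complex.ofReal)
        = Matrix.vecMul ξ ((Vᵀ * M).map Complex.ofReal) := by
    intro M
    rw [hw, ← hCcoe, Matrix.map_mul, Matrix.vecMul_vecMul]
  -- key identity
  have key : Matrix.vecMul w ((A - B * R₁ * Bᵀ * P₁).map Complex.ofReal)
        - (γ : ℂ) • Matrix.vecMul w ((B * R₂ * Bᵀ * P₁).map Complex.ofReal)
      = α • w := by
    rw [hsplit, hsplit, ← vecMul_smulM, ← Matrix.vecMul_sub, hmap, ← hCcoe,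
      Matrix.map_mul, ← Matrix.vecMul_vecMul, hCcoe, hξ, Matrix.smul_vecMul, ← hw]
  -- ρ as left eigenvector of K over ℂ
  have hρK : Matrix.vecMul (fun i => (ρ i : ℂ)) (K.map Complex.ofReal)
      = (γ : ℂ) • (fun i => (ρ i : ℂ)) := by
    have hρKr : Matrix.vecMul ρ K = γ • ρ := by
      rw [← hK.eq, Matrix.mulVec_transpose] at hKρ
      exact hKρ
    funext i
    have := (RingHom.map_vecMul C K ρ i).symm
    rw [hCcoe] at this
    calc Matrix.vecMul (fun i => (ρ i : ℂ)) (K.map Complex.ofReal) i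
        = ((Complex.ofReal ∘ ρ) ᵥ* K.map Complex.ofReal) i := rfl
      _ = Complex.ofReal ((ρ ᵥ* K) i) := this
      _ = (γ : ℂ) * (ρ i : ℂ) := by rw [hρKr]; simp [Pi.smul_apply]
      _ = ((γ : ℂ) • fun i => (ρ i : ℂ)) i := rfl
  -- main equation
  have main : Matrix.vecMul (fun p : Fin N × Fin n => (ρ p.1 : ℂ) * w p.2)
        (𝔸.map Complex.ofReal)
      = α • (fun p : Fin N × Fin n => (ρ p.1 : ℂ) * w p.2) := by
    have h𝔸c : 𝔸.map Complex.ofReal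
        = (1 : Matrix (Fin N) (Fin N) ℂ) ⊗ₖ ((A - B * R₁ * Bᵀ * P₁).map Complex.ofReal)
          - (K.map Complex.ofReal) ⊗ₖ ((B * R₂ * Bᵀ * P₁).map Complex.ofReal) := by
      rw [h𝔸]
      have : ((1 : Matrix (Fin N) (Fin N) ℝ)).map Complex.ofReal = 1 :=
        Matrix.map_one _ Complex.ofReal_zero Complex.ofReal_one
      rw [Matrix.map_sub Complex.ofReal (fun a b => Complex.ofReal_sub a b), map_kron, map_kron,
        this]
    rw [h𝔸c, Matrix.vecMul_sub]
    have e1 : Matrix.vecMul (fun p : Fin N × Fin n => (ρ p.1 : ℂ) * w p.2)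
          ((1 : Matrix (Fin N) (Fin N) ℂ) ⊗ₖ ((A - B * R₁ * Bᵀ * P₁).map Complex.ofReal))
        = fun p => Matrix.vecMul (fun i => (ρ i : ℂ)) (1 : Matrix (Fin N) (Fin N) ℂ) p.1
            * Matrix.vecMul w ((A - B * R₁ * Bᵀ * P₁).map Complex.ofReal) p.2 :=
      vecMul_kron (fun i => (ρ i : ℂ)) w 1 ((A - B * R₁ * Bᵀ * P₁).map Complex.ofReal)
    have e2 : Matrix.vecMul (fun p : Fin N × Fin n => (ρ p.1 : ℂ) * w p.2)
          ((K.map Complex.ofReal) ⊗ₖ ((B * R₂ * Bᵀ * P₁).map Complex.ofReal))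
        = fun p => Matrix.vecMul (fun i => (ρ i : ℂ)) (K.map Complex.ofReal) p.1
            * Matrix.vecMul w ((B * R₂ * Bᵀ * P₁).map Complex.ofReal) p.2 :=
      vecMul_kron (fun i => (ρ i : ℂ)) w (K.map Complex.ofReal)
        ((B * R₂ * Bᵀ * P₁).map Complex.ofReal)
    rw [e1, e2, hρK, Matrix.vecMul_one]
    funext p
    have hk := congrFun key p.2
    simp only [Pi.sub_apply, Pi.smul_apply, smul_eq_mul] at hk ⊢
    linear_combination (ρ p.1 : ℂ) * hk
  refine ⟨main, ?_⟩
  -- nonzero left eigenvector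
  set v0 : Fin N × Fin n → ℂ := fun p => (ρ p.1 : ℂ) * w p.2 with hv0
  have hv0ne : v0 ≠ 0 := by
    obtain ⟨i, hi⟩ := Function.ne_iff.mp hρ
    obtain ⟨j, hj⟩ := Function.ne_iff.mp hVξ
    intro h
    have := congrFun h (i, j)
    simp only [hv0, Pi.zero_apply, mul_eq_zero] at this
    rcases this with h' | h'
    · exact hi (by exact_mod_cast h')
    · exact hj h'
  have hdet : ((𝔸.map Complex.ofReal) - α • 1).det = 0 := by
    rw [← Matrix.exists_vecMul_eq_zero_iff]
    refine ⟨v0, hv0ne, ?_⟩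
    rw [Matrix.vecMul_sub, main, vecMul_smulM, Matrix.vecMul_one, sub_self]
  obtain ⟨u, hu, huA⟩ := Matrix.exists_mulVec_eq_zero_iff.mpr hdet
  have hmv : (𝔸.map Complex.ofReal).mulVec u = α • u := by
    rw [Matrix.sub_mulVec, Matrix.smul_mulVec, Matrix.one_mulVec, sub_eq_zero] at huA
    exact huA
  exact Module.End.hasEigenvalue_of_hasEigenvector
    ⟨Module.End.mem_eigenspace_iff.mpr (by simpa using hmv), hu⟩
end

section
/- Let A ∈ ℝ^{n×n}, B ∈ ℝ^{n×m}, and let R₁ ∈ ℝ^{m×m} be symmetric. Let v ∈ ℝⁿ be nonzero with Aᵀv = λv for some λ ∈ ℝ, let q₁ ≥ 0, and suppose r₁ := vᵀBR₁Bᵀv > 0. Set p₁ = (λ + √(λ² + q₁r₁))/r₁. Then P₁ = p₁·vvᵀ is symmetric positive semidefinite and satisfies the Riccati equation P₁A + AᵀP₁ − P₁BR₁BᵀP₁ + q₁·vvᵀ = 0. -/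
/-!
Because `v` is a left eigenvector of `A`, every term of the Riccati expression evaluated at
`P = p • vvᵀ` is a multiple of `vvᵀ`: `P A = Aᵀ P = λ P` and `P M P = p² (vᵀ M v) • vvᵀ`.
The equation therefore collapses to the scalar quadratic `2 λ p - r p² + q = 0`, whose larger
root is `p₁`; that root is nonnegative because `√(λ² + q r) ≥ |λ|`.
-/

open Matrix

namespace Matrix

variable {ι R : Type*} [Fintype ι] [CommRing R]

lemma vecMulVec_self_mul_of_transpose_mulVec_eq_smul {A : Matrix ι ι R} {v : ι → R} {μ : R}
    (hAv : Aᵀ *ᵥ v = μ • v) : vecMulVec v v * A = μ • vecMulVec v v := by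
  rw [vecMulVec_mul, ← mulVec_transpose, hAv, vecMulVec_smul]

lemma transpose_mul_vecMulVec_self_of_transpose_mulVec_eq_smul {A : Matrix ι ι R} {v : ι → R}
    {μ : R} (hAv : Aᵀ *ᵥ v = μ • v) : Aᵀ * vecMulVec v v = μ • vecMulVec v v := by
  rw [mul_vecMulVec, hAv, smul_vecMulVec]

lemma vecMulVec_self_mul_mul_vecMulVec_self (M : Matrix ι ι R) (v : ι → R) :
    vecMulVec v v * M * vecMulVec v v = (v ⬝ᵥ M *ᵥ v) • vecMulVec v v := by
  rw [vecMulVec_mul, vecMulVec_mul_vecMulVec, vecMulVec_smul, dotProduct_mulVec]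

lemma riccati_smul_vecMulVec_self {A M : Matrix ι ι R} {v : ι → R} {μ : R}
    (hAv : Aᵀ *ᵥ v = μ • v) (p q : R) :
    (p • vecMulVec v v) * A + Aᵀ * (p • vecMulVec v v)
        - (p • vecMulVec v v) * M * (p • vecMulVec v v) + q • vecMulVec v v
      = (2 * μ * p - (v ⬝ᵥ M *ᵥ v) * p ^ 2 + q) • vecMulVec v v := by
  simp only [smul_mul_assoc, mul_smul_comm, smul_smul,
    vecMulVec_self_mul_of_transpose_mulVec_eq_smul hAv,
    transpose_mul_vecMulVec_self_of_transpose_mulVec_eq_smul hAv,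
    vecMulVec_self_mul_mul_vecMulVec_self]
  module

end Matrix

section RiccatiRoot

variable {μ q r : ℝ}

lemma riccati_root_nonneg (hq : 0 ≤ q) (hr : 0 < r) :
    0 ≤ (μ + √(μ ^ 2 + q * r)) / r := by
  have hμ : |μ| ≤ √(μ ^ 2 + q * r) := Real.abs_le_sqrt (by nlinarith)
  exact div_nonneg (by linarith [neg_abs_le μ]) hr.le

lemma riccati_root_spec (hq : 0 ≤ q) (hr : 0 < r) :
    2 * μ * ((μ + √(μ ^ 2 + q * r)) / r) - r * ((μ + √(μ ^ 2 + q * r)) / r) ^ 2 + q = 0 := by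
  have hs : √(μ ^ 2 + q * r) ^ 2 = μ ^ 2 + q * r := Real.sq_sqrt (by positivity)
  field_simp
  linear_combination -hs

end RiccatiRoot

theorem stmt_6_general {n m : ℕ}
    (A : Matrix (Fin n) (Fin n) ℝ) (B : Matrix (Fin n) (Fin m) ℝ)
    (R₁ : Matrix (Fin m) (Fin m) ℝ)
    (v : Fin n → ℝ) (lam : ℝ) (hAv : Aᵀ.mulVec v = lam • v)
    (q₁ : ℝ) (hq₁ : 0 ≤ q₁)
    (r₁ : ℝ) (hr₁ : r₁ = v ⬝ᵥ (B * R₁ * Bᵀ).mulVec v) (hr₁pos : 0 < r₁)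
    (p₁ : ℝ) (hp₁ : p₁ = (lam + Real.sqrt (lam ^ 2 + q₁ * r₁)) / r₁)
    (P₁ : Matrix (Fin n) (Fin n) ℝ) (hP₁ : P₁ = p₁ • Matrix.vecMulVec v v) :
    P₁.PosSemidef ∧
    P₁ * A + Aᵀ * P₁ - P₁ * B * R₁ * Bᵀ * P₁ + q₁ • Matrix.vecMulVec v v = 0 := by
  subst hP₁
  constructor
  · have hvv : (vecMulVec v v).PosSemidef := by
      simpa using posSemidef_vecMulVec_self_star v
    exact hvv.smul (hp₁ ▸ riccati_root_nonneg hq₁ hr₁pos)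
  · have hassoc : p₁ • vecMulVec v v * B * R₁ * Bᵀ * (p₁ • vecMulVec v v)
        = p₁ • vecMulVec v v * (B * R₁ * Bᵀ) * (p₁ • vecMulVec v v) := by
      simp only [Matrix.mul_assoc]
    rw [hassoc, riccati_smul_vecMulVec_self hAv, ← hr₁, hp₁,
      riccati_root_spec hq₁ hr₁pos, zero_smul]

/-- Rank-one Riccati solution: if `Aᵀv = λv` with `v ≠ 0`, `q₁ ≥ 0`,
`r₁ = vᵀBR₁Bᵀv > 0`, and `p₁ = (λ + √(λ² + q₁r₁))/r₁`, then `P₁ = p₁ vvᵀ` is symmetric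
positive semidefinite and satisfies `P₁A + AᵀP₁ − P₁BR₁BᵀP₁ + q₁ vvᵀ = 0`. -/
theorem stmt_6 {n m : ℕ}
    (A : Matrix (Fin n) (Fin n) ℝ) (B : Matrix (Fin n) (Fin m) ℝ)
    (R₁ : Matrix (Fin m) (Fin m) ℝ) (hR₁ : R₁.IsSymm)
    (v : Fin n → ℝ) (hv : v ≠ 0) (lam : ℝ) (hAv : Aᵀ.mulVec v = lam • v)
    (q₁ : ℝ) (hq₁ : 0 ≤ q₁)
    (r₁ : ℝ) (hr₁ : r₁ = v ⬝ᵥ (B * R₁ * Bᵀ).mulVec v) (hr₁pos : 0 < r₁)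
    (p₁ : ℝ) (hp₁ : p₁ = (lam + Real.sqrt (lam ^ 2 + q₁ * r₁)) / r₁)
    (P₁ : Matrix (Fin n) (Fin n) ℝ) (hP₁ : P₁ = p₁ • Matrix.vecMulVec v v) :
    P₁.PosSemidef ∧
    P₁ * A + Aᵀ * P₁ - P₁ * B * R₁ * Bᵀ * P₁ + q₁ • Matrix.vecMulVec v v = 0 :=
  stmt_6_general A B R₁ v lam hAv q₁ hq₁ r₁ hr₁ hr₁pos p₁ hp₁ P₁ hP₁
end

section
/- Let A ∈ ℝ^{n×n}, B ∈ ℝ^{n×m}, and let R₁, R₂ ∈ ℝ^{m×m} be symmetric. Let v ∈ ℝⁿ be nonzero with Aᵀv = λv for some λ ∈ ℝ, let q₁ ≥ 0, suppose r₁ := vᵀBR₁Bᵀv > 0, and set r₂ = vᵀBR₂Bᵀv, s = √(λ² + q₁r₁), p₁ = (λ + s)/r₁, and P₁ = p₁·vvᵀ. Let K ∈ ℝ^{N×N} be symmetric and let γ be an eigenvalue of K. Then −s − γ(r₂/r₁)(λ + s) is an eigenvalue of the closed-loop matrix 𝔸 = I_N⊗(A − BR₁BᵀP₁) − K⊗(BR₂BᵀP₁).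 -/
/-! The rank-one Riccati solution makes `v` a common left eigenvector of both blocks:
`v (A - BR₁BᵀP₁) = (λ - p₁r₁) v = -s v` and `v (BR₂BᵀP₁) = p₁r₂ v`. For a left eigenvector `w`
of `K` with eigenvalue `γ`, the vectorization of `v wᵀ` is then a left eigenvector of `𝔸` with
eigenvalue `-s - γ p₁ r₂`. Real eigenvalues stay eigenvalues over `ℂ` because the
characteristic polynomial commutes with the embedding `ℝ → ℂ`. -/

open Matrix
open scoped Kronecker

namespace Matrix

theorem vec_vecMulVec_ne_zero {R : Type*} [MulZeroClass R] [NoZeroDivisors R] {ι κ : Type*}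
    {v : κ → R} {w : ι → R} (hv : v ≠ 0) (hw : w ≠ 0) : vec (vecMulVec v w) ≠ 0 := by
  obtain ⟨i, hi⟩ := Function.ne_iff.mp hv
  obtain ⟨j, hj⟩ := Function.ne_iff.mp hw
  exact Function.ne_iff.mpr ⟨(j, i), mul_ne_zero hi hj⟩

section CommRing

variable {R : Type*} [CommRing R] {ι κ : Type*} [Fintype ι] [Fintype κ]

theorem vec_vecMulVec_vecMul_kronecker (x : κ → R) (y : ι → R)
    (A : Matrix κ κ R) (B : Matrix ι ι R) :
    vec (vecMulVec x y) ᵥ* (B ⊗ₖ A) = vec (vecMulVec (x ᵥ* A) (y ᵥ* B)) := by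
  rw [vec_vecMul_kronecker, mul_vecMulVec, vecMulVec_mul, mulVec_transpose]

theorem vecMul_mul_smul_vecMulVec_self (v : κ → R) (G : Matrix κ κ R) (p : R) :
    v ᵥ* (G * (p • vecMulVec v v)) = (p * (v ⬝ᵥ G *ᵥ v)) • v := by
  rw [← vecMul_vecMul, vecMul_smul, vecMul_vecMulVec, dotProduct_mulVec, smul_smul]

end CommRing

section Field

variable {K : Type*} [Field K] {ι : Type*} [Fintype ι] [DecidableEq ι]

theorem mem_spectrum_iff_exists_vecMul_eq_smul {M : Matrix ι ι K} {r : K} :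
    r ∈ spectrum K M ↔ ∃ v ≠ 0, v ᵥ* M = r • v := by
  rw [spectrum.mem_iff, isUnit_iff_isUnit_det, isUnit_iff_ne_zero, not_not,
    ← exists_vecMul_eq_zero_iff]
  simp only [vecMul_sub, Algebra.algebraMap_eq_smul_one, vecMul_smul, vecMul_one, sub_eq_zero,
    eq_comm]

theorem map_mem_spectrum_map {L : Type*} [Field L] (f : K →+* L) {M : Matrix ι ι K} {r : K}
    (hr : r ∈ spectrum K M) : f r ∈ spectrum L (M.map f) := by
  rw [mem_spectrum_iff_isRoot_charpoly, charpoly_map] at *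
  exact hr.map

theorem sub_mul_mem_spectrum_one_kronecker_sub_kronecker {κ : Type*} [Fintype κ] [DecidableEq κ]
    {C D : Matrix κ κ K} {M : Matrix ι ι K} {v : κ → K} {α β γ : K} (hv : v ≠ 0)
    (hC : v ᵥ* C = α • v) (hD : v ᵥ* D = β • v) (hγ : γ ∈ spectrum K M) :
    α - γ * β ∈ spectrum K (1 ⊗ₖ C - M ⊗ₖ D) := by
  obtain ⟨w, hw, hMw⟩ := mem_spectrum_iff_exists_vecMul_eq_smul.mp hγ
  refine mem_spectrum_iff_exists_vecMul_eq_smul.mpr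
    ⟨vec (vecMulVec v w), vec_vecMulVec_ne_zero hv hw, ?_⟩
  rw [vecMul_sub, vec_vecMulVec_vecMul_kronecker, vec_vecMulVec_vecMul_kronecker, vecMul_one,
    hC, hD, hMw]
  ext ⟨j, i⟩
  simp only [vec, Pi.sub_apply, Pi.smul_apply, vecMulVec_apply, smul_eq_mul]
  ring

end Field

end Matrix

theorem stmt_7_general {n m N : ℕ}
    (A : Matrix (Fin n) (Fin n) ℝ) (B : Matrix (Fin n) (Fin m) ℝ)
    (R₁ R₂ : Matrix (Fin m) (Fin m) ℝ)
    (v : Fin n → ℝ) (hv : v ≠ 0) (lam : ℝ) (hAv : Aᵀ.mulVec v = lam • v)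
    (r₁ : ℝ) (hr₁ : r₁ = v ⬝ᵥ (B * R₁ * Bᵀ).mulVec v) (hr₁pos : 0 < r₁)
    (r₂ : ℝ) (hr₂ : r₂ = v ⬝ᵥ (B * R₂ * Bᵀ).mulVec v)
    (s : ℝ)
    (p₁ : ℝ) (hp₁ : p₁ = (lam + s) / r₁)
    (P₁ : Matrix (Fin n) (Fin n) ℝ) (hP₁ : P₁ = p₁ • Matrix.vecMulVec v v)
    (K : Matrix (Fin N) (Fin N) ℝ)
    (γ : ℝ) (hγ : γ ∈ spectrum ℝ K)
    (𝔸 : Matrix (Fin N × Fin n) (Fin N × Fin n) ℝ)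
    (h𝔸 : 𝔸 = (1 : Matrix (Fin N) (Fin N) ℝ) ⊗ₖ (A - B * R₁ * Bᵀ * P₁)
              - K ⊗ₖ (B * R₂ * Bᵀ * P₁)) :
    ((-s - γ * (r₂ / r₁) * (lam + s) : ℝ) : ℂ) ∈ spectrum ℂ (𝔸.map Complex.ofReal) := by
  have hp₁r₁ : p₁ * r₁ = lam + s := by
    rw [hp₁]
    field_simp
  have hC : v ᵥ* (A - B * R₁ * Bᵀ * P₁) = (-s) • v := by
    rw [vecMul_sub, ← mulVec_transpose, hAv, hP₁, vecMul_mul_smul_vecMulVec_self, ← hr₁, hp₁r₁,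
      ← sub_smul, sub_add_cancel_left]
  have hD : v ᵥ* (B * R₂ * Bᵀ * P₁) = (p₁ * r₂) • v := by
    rw [hP₁, vecMul_mul_smul_vecMulVec_self, ← hr₂]
  have hμ : -s - γ * (r₂ / r₁) * (lam + s) = -s - γ * (p₁ * r₂) := by
    rw [← hp₁r₁]
    field_simp
  rw [hμ, h𝔸]
  exact map_mem_spectrum_map Complex.ofRealHom
    (sub_mul_mem_spectrum_one_kronecker_sub_kronecker hv hC hD hγ)

/-- Eigenvalues of the closed-loop matrix with the rank-one Riccati solution: with
`Aᵀv = λv`, `r₁ = vᵀBR₁Bᵀv > 0`, `r₂ = vᵀBR₂Bᵀv`, `s = √(λ² + q₁r₁)`, `p₁ = (λ+s)/r₁`,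
`P₁ = p₁ vvᵀ`, and `γ` an eigenvalue of the symmetric matrix `K`, the number
`−s − γ(r₂/r₁)(λ+s)` is an eigenvalue of `𝔸 = I_N ⊗ (A − BR₁BᵀP₁) − K ⊗ (BR₂BᵀP₁)`. -/
theorem stmt_7 {n m N : ℕ}
    (A : Matrix (Fin n) (Fin n) ℝ) (B : Matrix (Fin n) (Fin m) ℝ)
    (R₁ R₂ : Matrix (Fin m) (Fin m) ℝ) (hR₁ : R₁.IsSymm) (hR₂ : R₂.IsSymm)
    (v : Fin n → ℝ) (hv : v ≠ 0) (lam : ℝ) (hAv : Aᵀ.mulVec v = lam • v)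
    (q₁ : ℝ) (hq₁ : 0 ≤ q₁)
    (r₁ : ℝ) (hr₁ : r₁ = v ⬝ᵥ (B * R₁ * Bᵀ).mulVec v) (hr₁pos : 0 < r₁)
    (r₂ : ℝ) (hr₂ : r₂ = v ⬝ᵥ (B * R₂ * Bᵀ).mulVec v)
    (s : ℝ) (hs : s = Real.sqrt (lam ^ 2 + q₁ * r₁))
    (p₁ : ℝ) (hp₁ : p₁ = (lam + s) / r₁)
    (P₁ : Matrix (Fin n) (Fin n) ℝ) (hP₁ : P₁ = p₁ • Matrix.vecMulVec v v)
    (K : Matrix (Fin N) (Fin N) ℝ) (hK : K.IsSymm)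
    (γ : ℝ) (hγ : γ ∈ spectrum ℝ K)
    (𝔸 : Matrix (Fin N × Fin n) (Fin N × Fin n) ℝ)
    (h𝔸 : 𝔸 = (1 : Matrix (Fin N) (Fin N) ℝ) ⊗ₖ (A - B * R₁ * Bᵀ * P₁)
              - K ⊗ₖ (B * R₂ * Bᵀ * P₁)) :
    ((-s - γ * (r₂ / r₁) * (lam + s) : ℝ) : ℂ) ∈ spectrum ℂ (𝔸.map Complex.ofReal) :=
  stmt_7_general A B R₁ R₂ v hv lam hAv r₁ hr₁ hr₁pos r₂ hr₂ s p₁ hp₁ P₁ hP₁ K γ hγ 𝔸 h𝔸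
end

section
/- Let K ∈ ℝ^{N×N} be symmetric and let M₀, M₁ ∈ ℝ^{n×n}. Then the set of complex eigenvalues of I_N⊗M₀ + K⊗M₁ equals the union, over all eigenvalues γ of K, of the sets of complex eigenvalues of M₀ + γM₁; that is, σ(I_N⊗M₀ + K⊗M₁) = ⋃_{γ ∈ σ(K)} σ(M₀ + γM₁). -/
open Matrix
open scoped Kronecker

/-!
Diagonalise `K = U D U⁻¹` with `D = diag(γ₁, …, γ_N)`. Conjugating by the unit `U ⊗ I_n` turns
`I_N ⊗ M₀ + K ⊗ M₁` into `I_N ⊗ M₀ + D ⊗ M₁`, which after swapping the two factors of the index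
set is block diagonal with blocks `M₀ + γᵢ M₁`; the spectrum of a block diagonal matrix is the
union of the spectra of its blocks.
-/

namespace Matrix

variable {R : Type*} [CommRing R] {ι m : Type*} [DecidableEq ι]

theorem one_kronecker_add_diagonal_kronecker (d : ι → R) (A B : Matrix m m R) :
    1 ⊗ₖ A + diagonal d ⊗ₖ B
      = reindex (.prodComm _ _) (.prodComm _ _) (blockDiagonal fun i => A + d i • B) := by
  rw [one_kronecker, diagonal_kronecker]
  change _ = reindex _ _ (blockDiagonal ((fun _ => A) + fun i => d i • B))
  rw [blockDiagonal_add]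
  rfl

variable [Fintype ι] [Fintype m] [DecidableEq m]

theorem spectrum_blockDiagonal (f : ι → Matrix m m R) :
    spectrum R (blockDiagonal f) = ⋃ i, spectrum R (f i) := by
  have hsub (x : R) : algebraMap R _ x - blockDiagonal f
      = blockDiagonal fun i => algebraMap R (Matrix m m R) x - f i := by
    simp only [Algebra.algebraMap_eq_smul_one]
    rw [← blockDiagonal_one, ← blockDiagonal_smul, ← blockDiagonal_sub]
    rfl
  ext x
  simp only [Set.mem_iUnion, spectrum.mem_iff, hsub, isUnit_iff_isUnit_det, det_blockDiagonal,
    IsUnit.prod_iff, Finset.mem_univ, true_imp_iff, not_forall]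

theorem spectrum_one_kronecker_add_diagonal_kronecker (d : ι → R) (A B : Matrix m m R) :
    spectrum R (1 ⊗ₖ A + diagonal d ⊗ₖ B) = ⋃ i, spectrum R (A + d i • B) := by
  rw [one_kronecker_add_diagonal_kronecker, ← coe_reindexAlgEquiv R R, AlgEquiv.spectrum_eq,
    spectrum_blockDiagonal]

theorem one_kronecker_add_conj_kronecker (u : (Matrix ι ι R)ˣ) (K : Matrix ι ι R)
    (A B : Matrix m m R) :
    1 ⊗ₖ A + (u * K * u⁻¹ : Matrix ι ι R) ⊗ₖ B
      = ((u : Matrix ι ι R) ⊗ₖ (1 : Matrix m m R)) * (1 ⊗ₖ A + K ⊗ₖ B)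
          * ((↑u⁻¹ : Matrix ι ι R) ⊗ₖ (1 : Matrix m m R)) := by
  simp only [mul_add, add_mul, ← mul_kronecker_mul, mul_one, one_mul, Units.mul_inv]

theorem spectrum_one_kronecker_add_conj_kronecker (u : (Matrix ι ι R)ˣ) (K : Matrix ι ι R)
    (A B : Matrix m m R) :
    spectrum R (1 ⊗ₖ A + (u * K * u⁻¹ : Matrix ι ι R) ⊗ₖ B) = spectrum R (1 ⊗ₖ A + K ⊗ₖ B) := by
  let v : (Matrix (ι × m) (ι × m) R)ˣ :=
    ⟨u ⊗ₖ 1, ↑u⁻¹ ⊗ₖ 1, by simp [← mul_kronecker_mul], by simp [← mul_kronecker_mul]⟩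
  rw [one_kronecker_add_conj_kronecker]
  exact spectrum.units_conjugate (u := v)

theorem IsHermitian.exists_map_ofReal_eq_conj_diagonal {n : Type*} [Fintype n] [DecidableEq n]
    {K : Matrix n n ℝ} (hK : K.IsHermitian) :
    ∃ u : (Matrix n n ℂ)ˣ,
      K.map Complex.ofReal = u * diagonal (fun i => (hK.eigenvalues i : ℂ)) * u⁻¹ := by
  let f : Matrix n n ℝ →+* Matrix n n ℂ := Complex.ofRealHom.mapMatrix
  let u := Unitary.toUnits hK.eigenvectorUnitary
  have hK' : K = (u : Matrix n n ℝ) * diagonal hK.eigenvalues * (↑u⁻¹ : Matrix n n ℝ) := by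
    simpa [Unitary.conjStarAlgAut_apply, u] using hK.spectral_theorem
  refine ⟨Units.map (f : Matrix n n ℝ →* Matrix n n ℂ) u, ?_⟩
  change f K = f u * _ * f ↑u⁻¹
  conv_lhs => rw [hK', map_mul, map_mul]
  simp [f]

end Matrix

/-- For a symmetric real matrix `K` and real matrices `M₀, M₁`, the set of complex
eigenvalues of `I_N ⊗ M₀ + K ⊗ M₁` is the union over the eigenvalues `γ` of `K` of the sets
of complex eigenvalues of `M₀ + γM₁`. -/
theorem stmt_8 {n N : ℕ}
    (K : Matrix (Fin N) (Fin N) ℝ) (hK : K.IsSymm)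
    (M₀ M₁ : Matrix (Fin n) (Fin n) ℝ) :
    spectrum ℂ (((1 : Matrix (Fin N) (Fin N) ℝ) ⊗ₖ M₀ + K ⊗ₖ M₁).map Complex.ofReal)
      = ⋃ γ ∈ spectrum ℝ K, spectrum ℂ ((M₀ + γ • M₁).map Complex.ofReal) := by
  have hK' : K.IsHermitian := isHermitian_iff_isSymm.mpr hK
  obtain ⟨u, hu⟩ := hK'.exists_map_ofReal_eq_conj_diagonal
  have hmap : ((1 : Matrix (Fin N) (Fin N) ℝ) ⊗ₖ M₀ + K ⊗ₖ M₁).map Complex.ofReal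
      = 1 ⊗ₖ M₀.map Complex.ofReal + K.map Complex.ofReal ⊗ₖ M₁.map Complex.ofReal := by
    ext ⟨i, a⟩ ⟨j, b⟩
    simp [one_apply, apply_ite Complex.ofReal]
  rw [hmap, hu, spectrum_one_kronecker_add_conj_kronecker,
    spectrum_one_kronecker_add_diagonal_kronecker, hK'.spectrum_real_eq_range_eigenvalues,
    Set.biUnion_range]
  refine Set.iUnion_congr fun i => congrArg (spectrum ℂ) ?_
  ext
  simp
end

section
/- Let K ∈ ℝ^{N×N} be symmetric and let M₀, M₁ ∈ ℝ^{n×n}. Then I_N⊗M₀ + K⊗M₁ is Hurwitz if and only if, for every eigenvalue γ of K, the matrix M₀ + γM₁ is Hurwitz. -/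
open Matrix
open scoped Kronecker

/-- A real square matrix is Hurwitz if every complex eigenvalue has negative real part. -/
def IsHurwitz {k : Type*} [Fintype k] [DecidableEq k] (M : Matrix k k ℝ) : Prop :=
  ∀ μ ∈ spectrum ℂ (M.map Complex.ofReal), μ.re < 0

private lemma mem_spectrum_iff_det' {m F : Type*} [Fintype m] [DecidableEq m] [Field F]
    (A : Matrix m m F) (z : F) :
    z ∈ spectrum F A ↔ (z • (1 : Matrix m m F) - A).det = 0 := by
  rw [spectrum.mem_iff, Algebra.algebraMap_eq_smul_one, Matrix.isUnit_iff_isUnit_det,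
    isUnit_iff_ne_zero, not_not]

private lemma det_conj_sub {m F : Type*} [Fintype m] [DecidableEq m] [CommRing F]
    (U W A : Matrix m m F) (h : U * W = 1) (z : F) :
    (z • (1 : Matrix m m F) - U * A * W).det = (z • (1 : Matrix m m F) - A).det := by
  have key : z • (1 : Matrix m m F) - U * A * W = U * (z • (1 : Matrix m m F) - A) * W := by
    rw [Matrix.mul_sub, Matrix.sub_mul]
    congr 1
    rw [mul_smul_comm, mul_one, smul_mul_assoc, h]
  rw [key, det_mul, det_mul, mul_comm U.det, mul_assoc, ← det_mul, h, det_one, mul_one]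

/-- For a symmetric real matrix `K` and real matrices `M₀, M₁`, the matrix
`I_N ⊗ M₀ + K ⊗ M₁` is Hurwitz iff `M₀ + γM₁` is Hurwitz for every eigenvalue `γ` of `K`. -/
theorem stmt_9 {n N : ℕ}
    (K : Matrix (Fin N) (Fin N) ℝ) (hK : K.IsSymm)
    (M₀ M₁ : Matrix (Fin n) (Fin n) ℝ) :
    IsHurwitz ((1 : Matrix (Fin N) (Fin N) ℝ) ⊗ₖ M₀ + K ⊗ₖ M₁)
      ↔ ∀ γ ∈ spectrum ℝ K, IsHurwitz (M₀ + γ • M₁) := by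
  classical
  have hH : K.IsHermitian := by
    rw [Matrix.IsHermitian, conjTranspose_eq_transpose_of_trivial]; exact hK
  set d : Fin N → ℝ := hH.eigenvalues with hd
  set U : Matrix (Fin N) (Fin N) ℝ := (hH.eigenvectorUnitary : Matrix (Fin N) (Fin N) ℝ) with hU
  have hspec : K = U * diagonal d * star U := by
    have := hH.spectral_theorem
    simpa [Function.comp] using this
  have hUW : U * star U = 1 := Matrix.mem_unitaryGroup_iff.mp hH.eigenvectorUnitary.2
  -- real spectrum of K
  have hKspec : ∀ γ : ℝ, (γ ∈ spectrum ℝ K ↔ ∃ i, d i = γ) := by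
    intro γ
    rw [mem_spectrum_iff_det']
    conv_lhs => rw [hspec]
    rw [det_conj_sub _ _ _ hUW, smul_one_eq_diagonal, diagonal_sub, det_diagonal,
      Finset.prod_eq_zero_iff]
    simp only [Finset.mem_univ, true_and, sub_eq_zero]
    exact exists_congr fun i => eq_comm
  -- complexifications
  have hco : Complex.ofReal = ⇑Complex.ofRealHom := rfl
  set M₀' : Matrix (Fin n) (Fin n) ℂ := M₀.map Complex.ofReal with hM₀'
  set M₁' : Matrix (Fin n) (Fin n) ℂ := M₁.map Complex.ofReal with hM₁'
  set U' : Matrix (Fin N) (Fin N) ℂ := U.map Complex.ofReal with hU'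
  set W' : Matrix (Fin N) (Fin N) ℂ := (star U).map Complex.ofReal with hW'
  have hU'W' : U' * W' = 1 := by
    rw [hU', hW', hco, ← Matrix.map_mul, hUW]; simp
  have hK' : K.map Complex.ofReal = U' * diagonal (fun i => (d i : ℂ)) * W' := by
    rw [hspec, hco, Matrix.map_mul, Matrix.map_mul]
    congr 1
    congr 1
    rw [diagonal_map (by simp)]
  have hmapA : ((1 : Matrix (Fin N) (Fin N) ℝ) ⊗ₖ M₀ + K ⊗ₖ M₁).map Complex.ofReal
      = (1 : Matrix (Fin N) (Fin N) ℂ) ⊗ₖ M₀' + (K.map Complex.ofReal) ⊗ₖ M₁' := by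
    ext ⟨i, j⟩ ⟨k, l⟩
    by_cases hik : i = k <;>
      simp [hM₀', hM₁', Matrix.map_apply, Matrix.kroneckerMap_apply, Matrix.one_apply, hik]
  have hmapγ : ∀ γ : ℝ, (M₀ + γ • M₁).map Complex.ofReal = M₀' + (γ : ℂ) • M₁' := by
    intro γ
    ext i j
    simp [hM₀', hM₁', Matrix.map_apply]
  -- complex spectrum of the big matrix
  have hdet : ∀ z : ℂ,
      (z ∈ spectrum ℂ (((1 : Matrix (Fin N) (Fin N) ℝ) ⊗ₖ M₀ + K ⊗ₖ M₁).map Complex.ofReal)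
        ↔ ∃ i, z ∈ spectrum ℂ ((M₀ + d i • M₁).map Complex.ofReal)) := by
    intro z
    rw [mem_spectrum_iff_det', hmapA, hK']
    have step : (1 : Matrix (Fin N) (Fin N) ℂ) ⊗ₖ M₀'
        + (U' * diagonal (fun i => (d i : ℂ)) * W') ⊗ₖ M₁'
        = (U' ⊗ₖ (1 : Matrix (Fin n) (Fin n) ℂ))
          * ((1 : Matrix (Fin N) (Fin N) ℂ) ⊗ₖ M₀' + (diagonal fun i => (d i : ℂ)) ⊗ₖ M₁')
          * (W' ⊗ₖ (1 : Matrix (Fin n) (Fin n) ℂ)) := by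
      simp [Matrix.mul_add, Matrix.add_mul, ← mul_kronecker_mul, hU'W', Matrix.mul_assoc]
    have hkron1 : (U' ⊗ₖ (1 : Matrix (Fin n) (Fin n) ℂ))
        * (W' ⊗ₖ (1 : Matrix (Fin n) (Fin n) ℂ)) = 1 := by
      rw [← mul_kronecker_mul, hU'W', mul_one, one_kronecker_one]
    rw [step, det_conj_sub _ _ _ hkron1]
    have hblock : z • (1 : Matrix (Fin N × Fin n) (Fin N × Fin n) ℂ)
        - ((1 : Matrix (Fin N) (Fin N) ℂ) ⊗ₖ M₀' + (diagonal fun i => (d i : ℂ)) ⊗ₖ M₁')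
        = Matrix.reindex (Equiv.prodComm _ _) (Equiv.prodComm _ _)
            (blockDiagonal fun i =>
              z • (1 : Matrix (Fin n) (Fin n) ℂ) - (M₀' + (d i : ℂ) • M₁')) := by
      ext ⟨i, j⟩ ⟨k, l⟩
      by_cases hik : i = k <;> by_cases hjl : j = l <;>
        simp [blockDiagonal_apply, Matrix.kroneckerMap_apply, Matrix.one_apply, diagonal_apply,
          hik, hjl, Prod.ext_iff]
    rw [hblock, det_reindex_self, det_blockDiagonal, Finset.prod_eq_zero_iff]
    constructor
    · rintro ⟨i, -, hi⟩
      exact ⟨i, by rw [mem_spectrum_iff_det', hmapγ]; exact hi⟩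
    · rintro ⟨i, hi⟩
      rw [mem_spectrum_iff_det', hmapγ] at hi
      exact ⟨i, Finset.mem_univ i, hi⟩
  constructor
  · intro h γ hγ μ hμ
    obtain ⟨i, rfl⟩ := (hKspec γ).mp hγ
    exact h μ ((hdet μ).mpr ⟨i, hμ⟩)
  · intro h μ hμ
    obtain ⟨i, hi⟩ := (hdet μ).mp hμ
    exact h (d i) ((hKspec _).mpr ⟨i, rfl⟩) μ hi
end

section
/- Let A ∈ ℝ^{n×n}, B ∈ ℝ^{n×m}, C ∈ ℝ^{p×n}, D ∈ ℝ^{p×m}, B_d ∈ ℝ^{n×n_d}, F₁, F₂ ∈ ℝ^{m×n}, and let K ∈ ℝ^{N×N} be symmetric. For γ ∈ ℝ set A_γ = A − B(F₁+γF₂) and C_γ = C − D(F₁+γF₂), and set Â = I_N⊗(A−BF₁) − K⊗(BF₂) and Ĉ = I_N⊗(C−DF₁) − K⊗(DF₂). Let s ∈ ℂ be such that sI_n − A_γ is invertible for every eigenvalue γ of K. Then sI_{Nn} − Â is invertible and the ℓ² operator norm satisfies ‖Ĉ(sI_{Nn} − Â)⁻¹(I_N⊗B_d)‖ = max_{γ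 ∈ σ(K)} ‖C_γ(sI_n − A_γ)⁻¹B_d‖. -/
/-!
Diagonalise `K = U Λ Uᵀ` with `U` orthogonal. Conjugation by `U ⊗ I` turns every pencil
`I ⊗ P + K ⊗ Q` into the block-diagonal matrix with blocks `P + γ Q`, `γ` running over the
eigenvalues of `K`. Hence `sI − Â`, `Ĉ` and `I ⊗ B_d` are simultaneously block diagonal, and so
is the transfer matrix, with blocks `C_γ (sI − A_γ)⁻¹ B_d`. The ℓ² operator norm is invariant under
unitary factors and permutations of indices, and the norm of a block-diagonal matrix is the
largest norm of its blocks.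
-/

open Matrix
open scoped Kronecker Matrix.Norms.L2Operator

namespace Matrix

section L2OpNorm

variable {𝕜 : Type*} [RCLike 𝕜] {l m n o : Type*} [Fintype l] [Fintype m] [Fintype n] [Fintype o]

lemma l2_opNorm_one_le [DecidableEq n] : ‖(1 : Matrix n n 𝕜)‖ ≤ 1 := by
  rw [← diagonal_one, l2_opNorm_diagonal]
  exact (pi_norm_le_iff_of_nonneg zero_le_one).2 fun _ => norm_one.le

lemma l2_opNorm_isometry_mul [DecidableEq m] [DecidableEq n] {U : Matrix l m 𝕜}
    (hU : Uᴴ * U = 1) (X : Matrix m n 𝕜) : ‖U * X‖ = ‖X‖ := by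
  refine (mul_self_inj (norm_nonneg _) (norm_nonneg _)).1 ?_
  rw [← l2_opNorm_conjTranspose_mul_self, ← l2_opNorm_conjTranspose_mul_self, conjTranspose_mul,
    Matrix.mul_assoc, ← Matrix.mul_assoc Uᴴ, hU, Matrix.one_mul]

lemma l2_opNorm_mul_coisometry [DecidableEq m] [DecidableEq n] {W : Matrix m n 𝕜}
    (hW : W * Wᴴ = 1) (X : Matrix l m 𝕜) : ‖X * W‖ = ‖X‖ := by
  classical
  rw [← l2_opNorm_conjTranspose, conjTranspose_mul,
    l2_opNorm_isometry_mul (by rwa [conjTranspose_conjTranspose]), l2_opNorm_conjTranspose]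

lemma l2_opNorm_le_one_of_isometry [DecidableEq m] {U : Matrix l m 𝕜} (hU : Uᴴ * U = 1) :
    ‖U‖ ≤ 1 := by
  simpa using (l2_opNorm_isometry_mul hU 1).trans_le l2_opNorm_one_le

omit [Fintype l] in
lemma conjTranspose_mul_self_one_submatrix [DecidableEq l] [DecidableEq m] {e : l → m}
    (he : Function.Injective e) :
    ((1 : Matrix m m 𝕜).submatrix id e)ᴴ * (1 : Matrix m m 𝕜).submatrix id e = 1 := by
  rw [conjTranspose_submatrix, conjTranspose_one, ← submatrix_mul _ _ _ _ _ Function.bijective_id,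
    Matrix.one_mul, submatrix_one _ he]

lemma l2_opNorm_submatrix_le [DecidableEq n] [DecidableEq o] (M : Matrix m n 𝕜) {e₁ : l → m}
    {e₂ : o → n} (he₁ : Function.Injective e₁) (he₂ : Function.Injective e₂) :
    ‖M.submatrix e₁ e₂‖ ≤ ‖M‖ := by
  classical
  set J₁ := (1 : Matrix m m 𝕜).submatrix id e₁
  set J₂ := (1 : Matrix n n 𝕜).submatrix id e₂
  have hM : M.submatrix e₁ e₂ = J₁ᴴ * M * J₂ := by
    symm
    simpa [J₁, J₂, conjTranspose_submatrix] using
      (congrArg (· * J₂) (one_submatrix_mul e₁ (Equiv.refl m) M)).trans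
        (mul_submatrix_one (Equiv.refl n) e₂ (M.submatrix e₁ id))
  calc ‖M.submatrix e₁ e₂‖ ≤ ‖J₁ᴴ‖ * ‖M‖ * ‖J₂‖ := by
        rw [hM]; exact (l2_opNorm_mul _ _).trans (by gcongr; exact l2_opNorm_mul _ _)
    _ ≤ 1 * ‖M‖ * 1 := by
        gcongr
        · rw [l2_opNorm_conjTranspose]
          exact l2_opNorm_le_one_of_isometry (conjTranspose_mul_self_one_submatrix he₁)
        · exact l2_opNorm_le_one_of_isometry (conjTranspose_mul_self_one_submatrix he₂)
    _ = ‖M‖ := by ring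

lemma l2_opNorm_submatrix_equiv [DecidableEq n] [DecidableEq o] (M : Matrix m n 𝕜) (e₁ : l ≃ m)
    (e₂ : o ≃ n) : ‖M.submatrix e₁ e₂‖ = ‖M‖ := by
  refine le_antisymm (l2_opNorm_submatrix_le _ e₁.injective e₂.injective) ?_
  calc ‖M‖ = ‖(M.submatrix e₁ e₂).submatrix e₁.symm e₂.symm‖ := by simp
    _ ≤ ‖M.submatrix e₁ e₂‖ := l2_opNorm_submatrix_le _ e₁.symm.injective e₂.symm.injective

omit [Fintype m] in
lemma blockDiagonal_mulVec [DecidableEq o] {α : Type*} [NonUnitalNonAssocSemiring α]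
    (f : o → Matrix m n α) (x : n × o → α) (i : m) (k : o) :
    (blockDiagonal f *ᵥ x) (i, k) = (f k *ᵥ fun j => x (j, k)) i := by
  simp [mulVec, dotProduct, blockDiagonal_apply, Fintype.sum_prod_type_right, ite_mul]

lemma l2_opNorm_blockDiagonal [DecidableEq n] [DecidableEq o] (f : o → Matrix m n 𝕜) :
    ‖blockDiagonal f‖ = ⨆ k, ‖f k‖ := by
  have hbdd : BddAbove (Set.range fun k => ‖f k‖) := (Set.finite_range _).bddAbove
  set S := ⨆ k, ‖f k‖
  have hS : 0 ≤ S := Real.iSup_nonneg fun _ => norm_nonneg _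
  refine le_antisymm ?_ (Real.iSup_le (fun k => ?_) (norm_nonneg _))
  · rw [l2_opNorm_def]
    refine ContinuousLinearMap.opNorm_le_bound _ hS fun x => ?_
    have hblock : ∀ k, ∑ i, ‖(f k *ᵥ fun j => x (j, k)) i‖ ^ 2 ≤ S ^ 2 * ∑ j, ‖x (j, k)‖ ^ 2 := by
      intro k
      have h := (l2_opNorm_mulVec (f k) (WithLp.toLp 2 fun j => x (j, k))).trans
        (mul_le_mul_of_nonneg_right (le_ciSup hbdd k) (norm_nonneg _))
      simpa [mul_pow, EuclideanSpace.norm_sq_eq] using pow_le_pow_left₀ (norm_nonneg _) h 2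
    refine (sq_le_sq₀ (norm_nonneg _) (by positivity)).1 ?_
    simp only [EuclideanSpace.norm_sq_eq, mul_pow, Fintype.sum_prod_type_right,
      LinearEquiv.trans_apply, LinearMap.coe_toContinuousLinearMap', toLpLin_apply,
      blockDiagonal_mulVec]
    exact (Finset.sum_le_sum fun k _ => hblock k).trans_eq (Finset.mul_sum ..).symm
  · calc ‖f k‖ = ‖(blockDiagonal f).submatrix (·, k) (·, k)‖ := by
          congr 1; ext i j; simp
      _ ≤ ‖blockDiagonal f‖ :=
          l2_opNorm_submatrix_le _ (Prod.mk_left_injective k) (Prod.mk_left_injective k)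

end L2OpNorm

section KroneckerPencil

variable {R : Type*} [CommRing R] {ι m n : Type*} [Fintype ι] [DecidableEq ι]

lemma isUnit_blockDiagonal [Fintype m] [DecidableEq m] {f : ι → Matrix m m R}
    (hf : ∀ i, IsUnit (f i)) : IsUnit (blockDiagonal f) := by
  rw [isUnit_iff_isUnit_det, det_blockDiagonal]
  exact IsUnit.prod_univ_iff.2 fun i => (isUnit_iff_isUnit_det _).1 (hf i)

lemma inv_blockDiagonal [Fintype m] [DecidableEq m] {f : ι → Matrix m m R}
    (hf : ∀ i, IsUnit (f i)) : (blockDiagonal f)⁻¹ = blockDiagonal fun i => (f i)⁻¹ := by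
  refine inv_eq_right_inv ?_
  rw [← blockDiagonal_mul]
  simp_rw [mul_nonsing_inv _ ((isUnit_iff_isUnit_det _).1 (hf _))]
  exact blockDiagonal_one

variable [StarRing R]

lemma conj_mul_conj_inv_mul_conj {l p q : Type*} [Fintype m] [Fintype n] [DecidableEq n]
    [Fintype p] {V : Matrix n n R} (hV : Vᴴ * V = 1) (hV' : V * Vᴴ = 1) (W₁ : Matrix l m R)
    (W₂ : Matrix p q R) (X : Matrix m n R) (Y : Matrix n n R) (Z : Matrix n p R) :
    W₁ * X * Vᴴ * (V * Y * Vᴴ)⁻¹ * (V * Z * W₂) = W₁ * (X * Y⁻¹ * Z) * W₂ := by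
  rw [Matrix.mul_inv_rev, Matrix.mul_inv_rev, inv_eq_left_inv hV, inv_eq_left_inv hV']
  simp only [Matrix.mul_assoc]
  rw [← Matrix.mul_assoc Vᴴ V, hV, Matrix.one_mul, ← Matrix.mul_assoc Vᴴ V, hV, Matrix.one_mul]

/-- `blockDiagonal` puts the block index last; `reindex` moves it first, as in `1 ⊗ₖ P`. -/
theorem one_kronecker_add_kronecker_eq [Fintype m] [Fintype n] [DecidableEq m] [DecidableEq n]
    {U : Matrix ι ι R} (hU : U * Uᴴ = 1) (d : ι → R) (P Q : Matrix m n R) :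
    (1 : Matrix ι ι R) ⊗ₖ P + (U * diagonal d * Uᴴ) ⊗ₖ Q
      = U ⊗ₖ (1 : Matrix m m R)
        * reindex (Equiv.prodComm _ _) (Equiv.prodComm _ _) (blockDiagonal fun i => P + d i • Q)
        * (U ⊗ₖ (1 : Matrix n n R))ᴴ := by
  have hdiag : reindex (Equiv.prodComm _ _) (Equiv.prodComm _ _)
      (blockDiagonal fun i => P + d i • Q) = (1 : Matrix ι ι R) ⊗ₖ P + diagonal d ⊗ₖ Q := by
    rw [one_kronecker, diagonal_kronecker, reindex_apply, reindex_apply, reindex_apply]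
    exact congrArg (fun M : Matrix (m × ι) (n × ι) R => M.submatrix _ _) (blockDiagonal_add _ _)
  rw [hdiag, conjTranspose_kronecker, conjTranspose_one, Matrix.mul_add, Matrix.add_mul,
    ← mul_kronecker_mul, ← mul_kronecker_mul, ← mul_kronecker_mul, ← mul_kronecker_mul]
  simp [hU]

theorem isUnit_one_kronecker_add_kronecker [Fintype m] [DecidableEq m] {U : Matrix ι ι R}
    (hU : U ∈ unitary (Matrix ι ι R)) {d : ι → R} {K : Matrix ι ι R}
    (hK : K = U * diagonal d * Uᴴ) {A₀ A₁ : Matrix m m R} (hA : ∀ i, IsUnit (A₀ + d i • A₁)) :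
    IsUnit ((1 : Matrix ι ι R) ⊗ₖ A₀ + K ⊗ₖ A₁) := by
  have hV : IsUnit (U ⊗ₖ (1 : Matrix m m R)) :=
    Unitary.isUnit_coe (U := ⟨_, kronecker_mem_unitary hU (one_mem _)⟩)
  have hblock : IsUnit (reindex (Equiv.prodComm _ _) (Equiv.prodComm _ _)
      (blockDiagonal fun i => A₀ + d i • A₁)) := by
    rw [isUnit_iff_isUnit_det, det_reindex_self, ← isUnit_iff_isUnit_det]
    exact isUnit_blockDiagonal hA
  rw [hK, one_kronecker_add_kronecker_eq (Unitary.mul_star_self_of_mem hU)]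
  exact (hV.mul hblock).mul hV.star

end KroneckerPencil

theorem l2_opNorm_one_kronecker_transfer {𝕜 : Type*} [RCLike 𝕜] {ι n p q : Type*} [Fintype ι]
    [DecidableEq ι] [Fintype n] [DecidableEq n] [Fintype p] [DecidableEq p] [Fintype q]
    [DecidableEq q] {U : Matrix ι ι 𝕜} (hU : U ∈ unitary (Matrix ι ι 𝕜)) {d : ι → 𝕜}
    {K : Matrix ι ι 𝕜} (hK : K = U * diagonal d * Uᴴ) {A₀ A₁ : Matrix n n 𝕜}
    (hA : ∀ i, IsUnit (A₀ + d i • A₁)) (C₀ C₁ : Matrix p n 𝕜) (B : Matrix n q 𝕜) :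
    ‖((1 : Matrix ι ι 𝕜) ⊗ₖ C₀ + K ⊗ₖ C₁) * ((1 : Matrix ι ι 𝕜) ⊗ₖ A₀ + K ⊗ₖ A₁)⁻¹
        * ((1 : Matrix ι ι 𝕜) ⊗ₖ B)‖
      = ⨆ i, ‖(C₀ + d i • C₁) * (A₀ + d i • A₁)⁻¹ * B‖ := by
  have hU' : U * Uᴴ = 1 := Unitary.mul_star_self_of_mem hU
  have hVn : U ⊗ₖ (1 : Matrix n n 𝕜) ∈ unitary _ := kronecker_mem_unitary hU (one_mem _)
  have hVp : U ⊗ₖ (1 : Matrix p p 𝕜) ∈ unitary _ := kronecker_mem_unitary hU (one_mem _)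
  have hVq : U ⊗ₖ (1 : Matrix q q 𝕜) ∈ unitary _ := kronecker_mem_unitary hU (one_mem _)
  have hB := one_kronecker_add_kronecker_eq hU' d B 0
  simp only [kronecker_zero, smul_zero, add_zero] at hB
  rw [hK, one_kronecker_add_kronecker_eq hU' d C₀ C₁, one_kronecker_add_kronecker_eq hU' d A₀ A₁,
    hB, conj_mul_conj_inv_mul_conj (Unitary.star_mul_self_of_mem hVn)
      (Unitary.mul_star_self_of_mem hVn),
    l2_opNorm_mul_coisometry (by
      rw [conjTranspose_conjTranspose]; exact Unitary.star_mul_self_of_mem hVq),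
    l2_opNorm_isometry_mul (Unitary.star_mul_self_of_mem hVp),
    inv_reindex, inv_blockDiagonal hA]
  simp only [reindex_apply, submatrix_mul_equiv, ← blockDiagonal_mul]
  rw [l2_opNorm_submatrix_equiv, l2_opNorm_blockDiagonal]

end Matrix

lemma Real.iSup_range_of_nonneg {ι β : Type*} [Finite ι] (e : ι → β) {g : β → ℝ}
    (hg : ∀ b, 0 ≤ g b) : ⨆ b ∈ Set.range e, g b = ⨆ i, g (e i) := by
  have hbdd : BddAbove (Set.range fun i => g (e i)) := (Set.finite_range _).bddAbove
  have hS : 0 ≤ ⨆ i, g (e i) := Real.iSup_nonneg fun _ => hg _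
  have hle : ∀ b, ⨆ _ : b ∈ Set.range e, g b ≤ ⨆ i, g (e i) := fun b =>
    Real.iSup_le (by rintro ⟨i, rfl⟩; exact le_ciSup hbdd i) hS
  have hbdd' : BddAbove (Set.range fun b => ⨆ _ : b ∈ Set.range e, g b) :=
    ⟨⨆ i, g (e i), Set.forall_mem_range.2 hle⟩
  refine le_antisymm (Real.iSup_le hle hS) (Real.iSup_le (fun i => ?_)
    (Real.iSup_nonneg fun b => Real.iSup_nonneg fun _ => hg b))
  exact le_ciSup_of_le hbdd' (e i) (ciSup_pos (f := fun _ => g (e i)) (Set.mem_range_self i)).ge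

lemma Matrix.IsHermitian.exists_unitary_map_ofReal_eq {n : Type*} [Fintype n] [DecidableEq n]
    {K : Matrix n n ℝ} (hK : K.IsHermitian) :
    ∃ U ∈ unitary (Matrix n n ℂ),
      K.map Complex.ofReal = U * diagonal (fun i => (hK.eigenvalues i : ℂ)) * Uᴴ := by
  have hmul : ∀ X Y : Matrix n n ℝ,
      (X * Y).map Complex.ofReal = X.map Complex.ofReal * Y.map Complex.ofReal :=
    fun _ _ => Matrix.map_mul (f := Complex.ofRealHom)
  have hstar : ∀ X : Matrix n n ℝ, (star X).map Complex.ofReal = star (X.map Complex.ofReal) :=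
    fun _ => conjTranspose_map _ fun r => (Complex.conj_ofReal r).symm
  have hV := hK.eigenvectorUnitary.2
  rw [Unitary.mem_iff] at hV
  refine ⟨(hK.eigenvectorUnitary : Matrix n n ℝ).map Complex.ofReal, ?_, ?_⟩
  · rw [Unitary.mem_iff, ← hstar, ← hmul, ← hmul, hV.1, hV.2,
      Matrix.map_one _ Complex.ofReal_zero Complex.ofReal_one]
    exact ⟨rfl, rfl⟩
  · conv_lhs => rw [hK.spectral_theorem]
    rw [Unitary.conjStarAlgAut_apply, hmul, hmul, hstar, diagonal_map Complex.ofReal_zero]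
    rfl

section Complexification

variable {ι a b c : Type*} [Fintype c] [DecidableEq ι]

lemma map_ofReal_one_kronecker (P : Matrix a b ℝ) :
    ((1 : Matrix ι ι ℝ) ⊗ₖ P).map Complex.ofReal = (1 : Matrix ι ι ℂ) ⊗ₖ P.map Complex.ofReal := by
  ext ⟨i, x⟩ ⟨j, y⟩
  simp [one_apply, apply_ite Complex.ofReal]

lemma map_ofReal_one_kronecker_sub_kronecker (K : Matrix ι ι ℝ) (P Q : Matrix a b ℝ) :
    ((1 : Matrix ι ι ℝ) ⊗ₖ P - K ⊗ₖ Q).map Complex.ofReal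
      = (1 : Matrix ι ι ℂ) ⊗ₖ P.map Complex.ofReal
        + K.map Complex.ofReal ⊗ₖ (-Q.map Complex.ofReal) := by
  ext ⟨i, x⟩ ⟨j, y⟩
  simp [one_apply, apply_ite Complex.ofReal, sub_eq_add_neg]

lemma smul_one_sub_map_ofReal_one_kronecker_sub_kronecker [DecidableEq a] (s : ℂ)
    (K : Matrix ι ι ℝ) (P Q : Matrix a a ℝ) :
    s • 1 - ((1 : Matrix ι ι ℝ) ⊗ₖ P - K ⊗ₖ Q).map Complex.ofReal
      = (1 : Matrix ι ι ℂ) ⊗ₖ (s • 1 - P.map Complex.ofReal)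
        + K.map Complex.ofReal ⊗ₖ Q.map Complex.ofReal := by
  ext ⟨i, x⟩ ⟨j, y⟩
  by_cases h : i = j <;> by_cases h' : x = y <;> simp [one_apply, h, h'] <;> ring

lemma map_ofReal_sub_mul_add_smul (X : Matrix a b ℝ) (Y : Matrix a c ℝ) (F₁ F₂ : Matrix c b ℝ)
    (γ : ℝ) : (X - Y * (F₁ + γ • F₂)).map Complex.ofReal
      = (X - Y * F₁).map Complex.ofReal + (γ : ℂ) • -(Y * F₂).map Complex.ofReal := by
  ext i j
  simp [Matrix.mul_add]
  ring

lemma smul_one_sub_map_ofReal_sub_mul_add_smul [Fintype a] [DecidableEq a] (s : ℂ)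
    (X : Matrix a a ℝ) (Y : Matrix a c ℝ) (F₁ F₂ : Matrix c a ℝ) (γ : ℝ) :
    s • 1 - (X - Y * (F₁ + γ • F₂)).map Complex.ofReal
      = (s • 1 - (X - Y * F₁).map Complex.ofReal) + (γ : ℂ) • (Y * F₂).map Complex.ofReal := by
  rw [map_ofReal_sub_mul_add_smul, smul_neg]
  abel

end Complexification

/-- Decomposition of the ℓ² operator norm of the closed-loop transfer matrix: if
`sIₙ − A_γ` is invertible for every eigenvalue `γ` of the symmetric matrix `K`, then
`sI_{Nn} − Â` is invertible and
`‖Ĉ (sI − Â)⁻¹ (I_N ⊗ B_d)‖ = max_{γ ∈ σ(K)} ‖C_γ (sI − A_γ)⁻¹ B_d‖`,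
where `A_γ = A − B(F₁+γF₂)`, `C_γ = C − D(F₁+γF₂)`,
`Â = I_N ⊗ (A−BF₁) − K ⊗ (BF₂)` and `Ĉ = I_N ⊗ (C−DF₁) − K ⊗ (DF₂)`. -/
theorem stmt_10 {n m p nd N : ℕ}
    (A : Matrix (Fin n) (Fin n) ℝ) (B : Matrix (Fin n) (Fin m) ℝ)
    (C : Matrix (Fin p) (Fin n) ℝ) (D : Matrix (Fin p) (Fin m) ℝ)
    (Bd : Matrix (Fin n) (Fin nd) ℝ) (F₁ F₂ : Matrix (Fin m) (Fin n) ℝ)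
    (K : Matrix (Fin N) (Fin N) ℝ) (hK : K.IsSymm)
    (Ahat : Matrix (Fin N × Fin n) (Fin N × Fin n) ℝ)
    (hAhat : Ahat = (1 : Matrix (Fin N) (Fin N) ℝ) ⊗ₖ (A - B * F₁) - K ⊗ₖ (B * F₂))
    (Chat : Matrix (Fin N × Fin p) (Fin N × Fin n) ℝ)
    (hChat : Chat = (1 : Matrix (Fin N) (Fin N) ℝ) ⊗ₖ (C - D * F₁) - K ⊗ₖ (D * F₂))
    (s : ℂ)
    (hs : ∀ γ ∈ spectrum ℝ K,
      IsUnit (s • (1 : Matrix (Fin n) (Fin n) ℂ)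
        - (A - B * (F₁ + γ • F₂)).map Complex.ofReal)) :
    IsUnit (s • (1 : Matrix (Fin N × Fin n) (Fin N × Fin n) ℂ) - Ahat.map Complex.ofReal) ∧
    ‖Chat.map Complex.ofReal
        * (s • (1 : Matrix (Fin N × Fin n) (Fin N × Fin n) ℂ) - Ahat.map Complex.ofReal)⁻¹
        * ((1 : Matrix (Fin N) (Fin N) ℝ) ⊗ₖ Bd).map Complex.ofReal‖
      = ⨆ γ ∈ spectrum ℝ K,
          ‖(C - D * (F₁ + γ • F₂)).map Complex.ofReal
            * (s • (1 : Matrix (Fin n) (Fin n) ℂ)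
                - (A - B * (F₁ + γ • F₂)).map Complex.ofReal)⁻¹
            * Bd.map Complex.ofReal‖ := by
  subst hAhat hChat
  have hKh : K.IsHermitian := hK
  obtain ⟨U, hU, hKc⟩ := hKh.exists_unitary_map_ofReal_eq
  have hunit : ∀ i, IsUnit ((s • 1 - (A - B * F₁).map Complex.ofReal)
      + (hKh.eigenvalues i : ℂ) • (B * F₂).map Complex.ofReal) := fun i => by
    simpa only [smul_one_sub_map_ofReal_sub_mul_add_smul] using
      hs _ (hKh.eigenvalues_mem_spectrum_real i)
  rw [smul_one_sub_map_ofReal_one_kronecker_sub_kronecker, map_ofReal_one_kronecker_sub_kronecker,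
    map_ofReal_one_kronecker, hKh.spectrum_real_eq_range_eigenvalues,
    Real.iSup_range_of_nonneg _ fun _ => norm_nonneg _]
  simp_rw [smul_one_sub_map_ofReal_sub_mul_add_smul, map_ofReal_sub_mul_add_smul]
  exact ⟨isUnit_one_kronecker_add_kronecker hU hKc hunit,
    l2_opNorm_one_kronecker_transfer hU hKc hunit _ _ _⟩
end

section
/- (Inverse LQR.) Let A ∈ ℝ^{n×n}, B ∈ ℝ^{n×m}, and let F̃ ∈ ℝ^{m×n} be such that A − BF̃ is Hurwitz. Suppose Z ∈ ℝ^{n×n} and R ∈ ℝ^{m×m} are symmetric positive definite, the block matrix [[sym((A − BF̃)Z), ZF̃ᵀ], [F̃Z, −R]] is negative semidefinite, and F̃Z = RBᵀ. Then Q := −AᵀZ⁻¹ − Z⁻¹A + Z⁻¹BRBᵀZ⁻¹ is positive semidefinite, P := Z⁻¹ is symmetric positive definite and satisfies the Riccati equation AᵀP + PA − PBRBᵀP + Q = 0, and F̃ = RBᵀP. -/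
open Matrix

/-- Inverse LQR (Proposition 1 of the paper): if `A − BF̃` is Hurwitz, `Z ≻ 0`, `R ≻ 0`,
`[[sym((A−BF̃)Z), ZF̃ᵀ], [F̃Z, −R]] ⪯ 0`, and `F̃Z = RBᵀ`, then
`Q = −AᵀZ⁻¹ − Z⁻¹A + Z⁻¹BRBᵀZ⁻¹` is positive semidefinite, `P = Z⁻¹` is symmetric positive
definite and satisfies `AᵀP + PA − PBRBᵀP + Q = 0`, and `F̃ = RBᵀP`. -/
theorem stmt_14 {n m : ℕ}
    (A : Matrix (Fin n) (Fin n) ℝ) (B : Matrix (Fin n) (Fin m) ℝ)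
    (F : Matrix (Fin m) (Fin n) ℝ) (hHur : IsHurwitz (A - B * F))
    (Z : Matrix (Fin n) (Fin n) ℝ) (hZ : Z.PosDef)
    (R : Matrix (Fin m) (Fin m) ℝ) (hR : R.PosDef)
    (hLMI : (-(Matrix.fromBlocks
        ((A - B * F) * Z + ((A - B * F) * Z)ᵀ)
        (Z * Fᵀ)
        (F * Z)
        (-R))).PosSemidef)
    (hFZ : F * Z = R * Bᵀ) :
    (-Aᵀ * Z⁻¹ - Z⁻¹ * A + Z⁻¹ * B * R * Bᵀ * Z⁻¹).PosSemidef ∧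
    (Z⁻¹).PosDef ∧
    Aᵀ * Z⁻¹ + Z⁻¹ * A - Z⁻¹ * B * R * Bᵀ * Z⁻¹
      + (-Aᵀ * Z⁻¹ - Z⁻¹ * A + Z⁻¹ * B * R * Bᵀ * Z⁻¹) = 0 ∧
    F = R * Bᵀ * Z⁻¹ := by
  have hZu : IsUnit Z.det := isUnit_iff_isUnit_det Z |>.1 hZ.isUnit
  have hZZi : Z * Z⁻¹ = 1 := mul_nonsing_inv Z hZu
  have hZiZ : Z⁻¹ * Z = 1 := nonsing_inv_mul Z hZu
  have hF : F = R * Bᵀ * Z⁻¹ := by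
    calc F = F * Z * Z⁻¹ := by rw [Matrix.mul_assoc, hZZi, Matrix.mul_one]
    _ = R * Bᵀ * Z⁻¹ := by rw [hFZ]
  have hZt : Zᵀ = Z := by
    have := hZ.isHermitian.eq; rwa [conjTranspose_eq_transpose_of_trivial] at this
  have hZit : (Z⁻¹)ᵀ = Z⁻¹ := by rw [transpose_nonsing_inv, hZt]
  have hRt : Rᵀ = R := by
    have := hR.isHermitian.eq; rwa [conjTranspose_eq_transpose_of_trivial] at this
  set C : Matrix (Fin n ⊕ Fin m) (Fin n) ℝ := fromRows Z⁻¹ (Bᵀ * Z⁻¹) with hC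
  have hpsd := hLMI.conjTranspose_mul_mul_same C
  have h1 : ∀ X : Matrix (Fin n) (Fin n) ℝ, Z⁻¹ * (Z * X) = X := by
    intro X; rw [← Matrix.mul_assoc, hZiZ, Matrix.one_mul]
  have h1' : ∀ X : Matrix (Fin n) (Fin m) ℝ, Z⁻¹ * (Z * X) = X := by
    intro X; rw [← Matrix.mul_assoc, hZiZ, Matrix.one_mul]
  have hkey : Cᴴ * (-(Matrix.fromBlocks
        ((A - B * F) * Z + ((A - B * F) * Z)ᵀ)
        (Z * Fᵀ) (F * Z) (-R))) * C
      = -Aᵀ * Z⁻¹ - Z⁻¹ * A + Z⁻¹ * B * R * Bᵀ * Z⁻¹ := by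
    rw [conjTranspose_eq_transpose_of_trivial, hC, transpose_fromRows, Matrix.mul_neg,
      Matrix.neg_mul, Matrix.mul_assoc, fromBlocks_mul_fromRows, fromCols_mul_fromRows]
    subst hF
    simp only [transpose_mul, transpose_transpose, transpose_add, transpose_sub,
      transpose_neg, hZit, hZt, hRt, Matrix.mul_add,
      Matrix.add_mul, Matrix.sub_mul, Matrix.mul_sub, Matrix.neg_mul, Matrix.mul_neg,
      Matrix.mul_assoc, h1, h1', hZiZ, hZZi, Matrix.mul_one]
    noncomm_ring
  rw [hkey] at hpsd
  refine ⟨hpsd, hZ.inv, by noncomm_ring, hF⟩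
end

section
/- (Preservation of the PBH observability condition under the hierarchical weighting.) Let A, Q₁, Q₂ ∈ ℝ^{n×n} with Q₁ and Q₂ symmetric positive semidefinite, and let K ∈ ℝ^{N×N} be symmetric positive semidefinite. Suppose that for every λ ∈ ℂ and every nonzero v ∈ ℂⁿ with Av = λv one has Q₁v ≠ 0. Then for every λ ∈ ℂ and every nonzero x ∈ ℂ^{Nn} with (I_N⊗A)x = λx, one has (I_N⊗Q₁ + K⊗Q₂)x ≠ 0. -/
/-!
Both `I ⊗ Q₁` and `K ⊗ Q₂` are positive semidefinite, so if their sum kills `x` then the two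
nonnegative quadratic forms `x* (I ⊗ Q₁) x` and `x* (K ⊗ Q₂) x` add up to zero, hence both vanish
and `(I ⊗ Q₁) x = 0`. Since `I ⊗ A` and `I ⊗ Q₁` act blockwise, any nonzero block of an
eigenvector `x` of `I ⊗ A` is an eigenvector of `A` killed by `Q₁`, contradicting the PBH
condition.
-/

open Matrix
open scoped Kronecker ComplexOrder

namespace Matrix

variable {l m : Type*}

theorem map_kronecker {n p α β : Type*} [CommSemiring α] [CommSemiring β] (f : α →+* β)
    (A : Matrix l m α) (B : Matrix n p α) :
    (A ⊗ₖ B).map f = A.map f ⊗ₖ B.map f := by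
  ext; simp [kroneckerMap_apply]

theorem one_kronecker_mulVec_apply {α : Type*} [Semiring α] [Fintype l] [DecidableEq l]
    [Fintype m] (B : Matrix m m α) (x : l × m → α) (i : l) (j : m) :
    ((1 ⊗ₖ B : Matrix (l × m) (l × m) α) *ᵥ x) (i, j) = (B *ᵥ fun k => x (i, k)) j := by
  simp [mulVec, dotProduct, Fintype.sum_prod_type, kroneckerMap_apply, one_apply, ite_mul]

theorem PosSemidef.map_ofReal [Fintype m] {M : Matrix m m ℝ} (hM : M.PosSemidef) :
    (M.map Complex.ofReal).PosSemidef := by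
  classical
  open scoped MatrixOrder in
  obtain ⟨B, rfl⟩ := CStarAlgebra.nonneg_iff_eq_star_mul_self.mp hM.nonneg
  have hmap : (star B * B).map Complex.ofReal = (B.map Complex.ofReal)ᴴ * B.map Complex.ofReal :=
    (Matrix.map_mul (f := Complex.ofRealHom)).trans <|
      congrArg (· * _) (conjTranspose_map _ fun _ => (Complex.conj_ofReal _).symm)
  exact hmap ▸ posSemidef_conjTranspose_mul_self _

theorem PosSemidef.mulVec_eq_zero_of_add_mulVec_eq_zero {𝕜 : Type*} [RCLike 𝕜] [Fintype m]
    {P Q : Matrix m m 𝕜} (hP : P.PosSemidef) (hQ : Q.PosSemidef) {x : m → 𝕜}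
    (h : (P + Q) *ᵥ x = 0) : P *ᵥ x = 0 := by
  have hsum : star x ⬝ᵥ P *ᵥ x + star x ⬝ᵥ Q *ᵥ x = 0 := by
    rw [← dotProduct_add, ← add_mulVec, h, dotProduct_zero]
  have hQx := hQ.dotProduct_mulVec_nonneg x
  refine (hP.dotProduct_mulVec_zero_iff x).mp (le_antisymm ?_ (hP.dotProduct_mulVec_nonneg x))
  calc star x ⬝ᵥ P *ᵥ x ≤ star x ⬝ᵥ P *ᵥ x + star x ⬝ᵥ Q *ᵥ x := le_add_of_nonneg_right hQx
    _ = 0 := hsum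

end Matrix

theorem one_kronecker_add_kronecker_mulVec_ne_zero {𝕜 ι m : Type*} [RCLike 𝕜] [Fintype ι]
    [DecidableEq ι] [Fintype m] {A Q₁ Q₂ : Matrix m m 𝕜} {K : Matrix ι ι 𝕜}
    (hQ₁ : Q₁.PosSemidef) (hQ₂ : Q₂.PosSemidef) (hK : K.PosSemidef)
    (hPBH : ∀ (lam : 𝕜) (v : m → 𝕜), v ≠ 0 → A *ᵥ v = lam • v → Q₁ *ᵥ v ≠ 0)
    {lam : 𝕜} {x : ι × m → 𝕜} (hx : x ≠ 0) (heig : (1 ⊗ₖ A) *ᵥ x = lam • x) :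
    (1 ⊗ₖ Q₁ + K ⊗ₖ Q₂) *ᵥ x ≠ 0 := by
  intro hzero
  have hQ₁x : (1 ⊗ₖ Q₁) *ᵥ x = 0 :=
    (PosSemidef.one.kronecker hQ₁).mulVec_eq_zero_of_add_mulVec_eq_zero (hK.kronecker hQ₂) hzero
  obtain ⟨⟨i, j⟩, hij⟩ := Function.ne_iff.mp hx
  refine hPBH lam (fun k => x (i, k)) (fun h => hij (congrFun h j)) ?_ ?_ <;> ext k
  · simpa only [one_kronecker_mulVec_apply, Pi.smul_apply] using congrFun heig (i, k)
  · simpa only [one_kronecker_mulVec_apply, Pi.zero_apply] using congrFun hQ₁x (i, k)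

/-- Preservation of the PBH observability condition under the hierarchical weighting:
if `Q₁v ≠ 0` for every eigenvector `v` of `A`, then `(I_N⊗Q₁ + K⊗Q₂)x ≠ 0` for every
eigenvector `x` of `I_N⊗A`. -/
theorem stmt_17 {n N : ℕ}
    (A Q₁ Q₂ : Matrix (Fin n) (Fin n) ℝ)
    (hQ₁ : Q₁.PosSemidef) (hQ₂ : Q₂.PosSemidef)
    (K : Matrix (Fin N) (Fin N) ℝ) (hK : K.PosSemidef)
    (hPBH : ∀ (lam : ℂ) (v : Fin n → ℂ), v ≠ 0 →
      (A.map Complex.ofReal).mulVec v = lam • v → (Q₁.map Complex.ofReal).mulVec v ≠ 0) :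
    ∀ (lam : ℂ) (x : Fin N × Fin n → ℂ), x ≠ 0 →
      (((1 : Matrix (Fin N) (Fin N) ℝ) ⊗ₖ A).map Complex.ofReal).mulVec x = lam • x →
      (((1 : Matrix (Fin N) (Fin N) ℝ) ⊗ₖ Q₁ + K ⊗ₖ Q₂).map Complex.ofReal).mulVec x ≠ 0 := by
  intro lam x hx heig
  have hmap (M : Matrix (Fin N) (Fin N) ℝ) (B : Matrix (Fin n) (Fin n) ℝ) :
      (M ⊗ₖ B).map Complex.ofReal = M.map Complex.ofReal ⊗ₖ B.map Complex.ofReal :=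
    map_kronecker Complex.ofRealHom M B
  have hone : (1 : Matrix (Fin N) (Fin N) ℝ).map Complex.ofReal = 1 :=
    Matrix.map_one _ Complex.ofReal_zero Complex.ofReal_one
  rw [hmap, hone] at heig
  rw [Matrix.map_add _ Complex.ofReal_add, hmap, hmap, hone]
  exact one_kronecker_add_kronecker_mulVec_ne_zero hQ₁.map_ofReal hQ₂.map_ofReal hK.map_ofReal
    hPBH hx heig
end
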